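/- arXiv:1505.04204 — 6 statements merged into one kernel-verified Lean document; each statement's English description precedes it below -/
import Mathlib

section
/- For any integers n ≥ 1, 0 ≤ i ≤ n, and k ≥ 1, the polynomial p_n^{(i)}(k) = C(n,i)·C(k+n-1,n)·(k+n)/(k+i) satisfies the identity p_n^{(i)}(k) = Σ_{j=1}^{i} (-1)^{j-1} C(n+j,n) p_n^{(i-j)}(k) + (-1)^i C(n+k+i,n). -/
/-- The rational function `p_n^{(i)}(k) = C(n,i)·C(k+n-1,n)·(k+n)/(k+i)`,
evaluated at positive integers `k`. By convention `p_n^{(0)}(k) = C(k+n,n)`. -/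
noncomputable def pfun (n i k : ℕ) : ℚ :=
  (n.choose i : ℚ) * ((k + n - 1).choose n : ℚ) * ((k : ℚ) + n) / ((k : ℚ) + i)

noncomputable def Wfun (n k r i : ℕ) : ℚ :=
  ∑ j ∈ Finset.range (i+1), (-1:ℚ)^j * ((n - r + j).choose (n-r) : ℚ) * pfun n (i-j) k

lemma prodPos (i : ℕ) (x : ℚ) (hx : 0 < x) : 0 < ∏ t ∈ Finset.range (i+1), (x + t) := by
  apply Finset.prod_pos
  intro t _
  positivity

lemma L1 (i : ℕ) : ∀ x : ℚ, 0 < x →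
    ∑ m ∈ Finset.range (i+1), (-1:ℚ)^m * (i.choose m : ℚ) / (x + m)
      = (i.factorial : ℚ) / ∏ t ∈ Finset.range (i+1), (x + t) := by
  induction i with
  | zero => intro x hx; simp
  | succ i ih =>
    intro x hx
    have hx1 : (0:ℚ) < x + 1 := by linarith
    have A := ih x hx
    have A' := ih (x+1) hx1
    set G : ℕ → ℚ := fun m => (-1:ℚ)^m * (i.choose m : ℚ) / (x + m) with hG
    set H : ℕ → ℚ := fun m => (-1:ℚ)^m * (i.choose m : ℚ) / ((x+1) + m) with hH
    have hsplit : ∀ m, (-1:ℚ)^(m+1) * ((i+1).choose (m+1) : ℚ) / (x + (m+1:ℕ))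
        = -H m + G (m+1) := by
      intro m
      have hne : x + ((m:ℚ)+1) ≠ 0 := by positivity
      rw [Nat.choose_succ_succ]
      push_cast
      rw [hH, hG]
      push_cast
      field_simp
      ring
    -- sum of G (m+1)
    have hGsum : ∑ m ∈ Finset.range (i+1), G (m+1)
        = (∑ m ∈ Finset.range (i+1), G m) - G 0 := by
      have e1 := Finset.sum_range_succ' G (i+1)
      have e2 := Finset.sum_range_succ G (i+1)
      have : G (i+1) = 0 := by
        simp [hG, Nat.choose_succ_self]
      rw [this, add_zero] at e2
      linarith [e1, e2]
    have key : ∑ m ∈ Finset.range (i+1+1), (-1:ℚ)^m * ((i+1).choose m : ℚ) / (x + m)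
        = (∑ m ∈ Finset.range (i+1), G m) - ∑ m ∈ Finset.range (i+1), H m := by
      rw [Finset.sum_range_succ']
      have : ∀ m ∈ Finset.range (i+1),
          (-1:ℚ)^(m+1) * ((i+1).choose (m+1) : ℚ) / (x + (m+1:ℕ)) = -H m + G (m+1) :=
        fun m _ => hsplit m
      rw [Finset.sum_congr rfl this, Finset.sum_add_distrib, hGsum, Finset.sum_neg_distrib]
      have hg0 : G 0 = 1 / x := by simp [hG]
      simp only [pow_zero, Nat.choose_zero_right, Nat.cast_one, Nat.cast_zero, add_zero, one_mul]
      rw [hg0]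
      ring
    rw [key, A, A']
    -- now products
    set P := ∏ t ∈ Finset.range (i+1), (x + t) with hP
    set P' := ∏ t ∈ Finset.range (i+1), ((x+1) + t) with hP'
    have hQ1 : ∏ t ∈ Finset.range (i+1+1), (x + t) = P * (x + (i+1)) := by
      rw [Finset.prod_range_succ]; push_cast; ring
    have hQ2 : ∏ t ∈ Finset.range (i+1+1), (x + t) = x * P' := by
      rw [Finset.prod_range_succ']
      have : ∀ t ∈ Finset.range (i+1), (x + ((t:ℚ)+1)) = ((x+1) + t) := by
        intro t _; ring
      push_cast
      rw [Finset.prod_congr rfl this]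
      ring
    have hPne : P ≠ 0 := ne_of_gt (prodPos i x hx)
    have hP'ne : P' ≠ 0 := ne_of_gt (prodPos i (x+1) hx1)
    have hxne : x ≠ 0 := ne_of_gt hx
    rw [hQ1]
    have hx1ne : x + ((i:ℚ)+1) ≠ 0 := by positivity
    have hPP' : P * (x + ((i:ℚ)+1)) = x * P' := by
      rw [← hQ1, hQ2]
    push_cast
    field_simp
    push_cast [Nat.factorial_succ]
    linear_combination (-(i.factorial:ℚ)) * hPP'

lemma prodFact (k : ℕ) (hk : 1 ≤ k) (i : ℕ) :
    (∏ t ∈ Finset.range (i+1), ((k:ℚ) + t)) * ((k-1).factorial : ℚ) = ((k+i).factorial : ℚ) := by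
  induction i with
  | zero =>
    obtain ⟨m, rfl⟩ := Nat.exists_eq_add_of_le hk
    have : 1 + m - 1 = m := by omega
    simp only [this]
    have : 1 + m = m + 1 := by omega
    simp only [this, Nat.cast_add]
    rw [Finset.prod_range_one]
    push_cast [Nat.factorial_succ]
    ring
  | succ i ih =>
    rw [Finset.prod_range_succ, mul_comm _ ((k:ℚ) + (i+1:ℕ)), mul_assoc, ih]
    have : k + (i+1) = (k+i) + 1 := by omega
    rw [this]
    push_cast [Nat.factorial_succ]
    ring

lemma factne (m : ℕ) : ((m.factorial : ℚ)) ≠ 0 :=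
  Nat.cast_ne_zero.mpr (Nat.factorial_ne_zero m)

lemma chooseSplit (n i j : ℕ) (hj : j ≤ i) (hi : i ≤ n) :
    ((n-i+j).choose (n-i) : ℚ) * (n.choose (i-j) : ℚ)
      = (n.choose i : ℚ) * (i.choose (i-j) : ℚ) := by
  rw [Nat.cast_choose ℚ (by omega : n-i ≤ n-i+j),
      Nat.cast_choose ℚ (by omega : i-j ≤ n),
      Nat.cast_choose ℚ hi,
      Nat.cast_choose ℚ (by omega : i-j ≤ i)]
  have e1 : n-i+j-(n-i) = j := by omega
  have e2 : n-(i-j) = n-i+j := by omega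
  have e3 : i-(i-j) = j := by omega
  rw [e1, e2, e3]
  field_simp

lemma diagFact (n k i : ℕ) (hi : i ≤ n) (hk : 1 ≤ k) :
    (n.choose i : ℚ) * ((k+n-1).choose n : ℚ) * ((k:ℚ)+n) * (i.factorial : ℚ)
      = ((n+k).choose (n-i) : ℚ) * (∏ t ∈ Finset.range (i+1), ((k:ℚ)+t)) := by
  have hprod := prodFact k hk i
  rw [Nat.cast_choose ℚ (by omega : n ≤ k+n-1),
      Nat.cast_choose ℚ (by omega : n-i ≤ n+k)]
  have e1 : k+n-1-n = k-1 := by omega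
  have e2 : n+k-(n-i) = k+i := by omega
  rw [e1, e2, Nat.cast_choose ℚ hi]
  have e3 : ((k+n-1).factorial : ℚ) * ((k:ℚ)+n) = ((n+k).factorial : ℚ) := by
    have : n+k = (k+n-1)+1 := by omega
    rw [this, Nat.factorial_succ]
    push_cast [this]
    have : ((k+n-1 : ℕ) : ℚ) = (k:ℚ)+n-1 := by push_cast [Nat.cast_sub (by omega : 1 ≤ k+n)]; ring
    rw [this]; ring
  have hne : (∏ t ∈ Finset.range (i+1), ((k:ℚ)+t)) ≠ 0 := by
    apply Finset.prod_ne_zero_iff.mpr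
    intro t _
    have : (0:ℚ) < (k:ℚ) + t := by positivity
    linarith
  have hprod' : (∏ t ∈ Finset.range (i+1), ((k:ℚ)+t)) = ((k+i).factorial : ℚ)/((k-1).factorial : ℚ) := by
    rw [eq_div_iff (factne _)]; exact hprod
  rw [hprod', ← e3]
  field_simp

lemma diag (n k i : ℕ) (hi : i ≤ n) (hk : 1 ≤ k) :
    Wfun n k i i = (-1:ℚ)^i * ((n+k).choose (n-i) : ℚ) := by
  have hkpos : (0:ℚ) < (k:ℚ) := by exact_mod_cast hk
  set C : ℚ := (n.choose i : ℚ) * ((k+n-1).choose n : ℚ) * ((k:ℚ)+n) with hC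
  have stepA : Wfun n k i i
      = C * ∑ j ∈ Finset.range (i+1), (-1:ℚ)^j * (i.choose (i-j) : ℚ) / ((k:ℚ) + (i-j:ℕ)) := by
    rw [Wfun, Finset.mul_sum]
    apply Finset.sum_congr rfl
    intro j hj
    have hj' : j ≤ i := Nat.lt_succ_iff.mp (Finset.mem_range.mp hj)
    have hcs := chooseSplit n i j hj' hi
    rw [pfun, hC]
    calc (-1:ℚ)^j * ((n-i+j).choose (n-i) : ℚ) *
          ((n.choose (i-j) : ℚ) * ((k+n-1).choose n : ℚ) * ((k:ℚ)+n) / ((k:ℚ)+(i-j:ℕ)))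
        = ((-1:ℚ)^j * (((n-i+j).choose (n-i) : ℚ) * (n.choose (i-j) : ℚ)) *
            ((k+n-1).choose n : ℚ) * ((k:ℚ)+n)) / ((k:ℚ)+(i-j:ℕ)) := by ring
      _ = ((-1:ℚ)^j * ((n.choose i : ℚ) * (i.choose (i-j) : ℚ)) *
            ((k+n-1).choose n : ℚ) * ((k:ℚ)+n)) / ((k:ℚ)+(i-j:ℕ)) := by rw [hcs]
      _ = (n.choose i : ℚ) * ((k+n-1).choose n : ℚ) * ((k:ℚ)+n) *
            ((-1:ℚ)^j * (i.choose (i-j) : ℚ) / ((k:ℚ)+(i-j:ℕ))) := by ring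
  have stepB : ∑ j ∈ Finset.range (i+1), (-1:ℚ)^j * (i.choose (i-j) : ℚ) / ((k:ℚ) + (i-j:ℕ))
      = (-1:ℚ)^i * ((i.factorial : ℚ) / ∏ t ∈ Finset.range (i+1), ((k:ℚ) + t)) := by
    have hrefl := Finset.sum_range_reflect
      (fun m => (-1:ℚ)^(i-m) * (i.choose m : ℚ) / ((k:ℚ) + m)) (i+1)
    simp only [Nat.add_sub_cancel] at hrefl
    have e1 : ∑ j ∈ Finset.range (i+1), (-1:ℚ)^j * (i.choose (i-j) : ℚ) / ((k:ℚ) + (i-j:ℕ))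
        = ∑ j ∈ Finset.range (i+1), (-1:ℚ)^(i-(i-j)) * (i.choose (i-j) : ℚ) / ((k:ℚ) + (i-j:ℕ)) := by
      apply Finset.sum_congr rfl
      intro j hj
      have hj' : j ≤ i := Nat.lt_succ_iff.mp (Finset.mem_range.mp hj)
      have : i - (i - j) = j := by omega
      rw [this]
    rw [e1, hrefl]
    rw [← L1 i (k:ℚ) hkpos, Finset.mul_sum]
    apply Finset.sum_congr rfl
    intro m hm
    have hm' : m ≤ i := Nat.lt_succ_iff.mp (Finset.mem_range.mp hm)
    have hpow : (-1:ℚ)^(i-m) = (-1:ℚ)^i * (-1:ℚ)^m := by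
      have h1 : (-1:ℚ)^(i-m) * (-1:ℚ)^m = (-1:ℚ)^i := by
        rw [← pow_add, Nat.sub_add_cancel hm']
      have h3 : (-1:ℚ)^m * (-1:ℚ)^m = 1 := by
        rw [← mul_pow]; norm_num
      calc (-1:ℚ)^(i-m) = (-1:ℚ)^(i-m) * ((-1:ℚ)^m * (-1:ℚ)^m) := by rw [h3, mul_one]
        _ = ((-1:ℚ)^(i-m) * (-1:ℚ)^m) * (-1:ℚ)^m := by ring
        _ = (-1:ℚ)^i * (-1:ℚ)^m := by rw [h1]
    rw [hpow]
    ring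
  rw [stepA, stepB]
  have hne : (∏ t ∈ Finset.range (i+1), ((k:ℚ)+t)) ≠ 0 := by
    apply Finset.prod_ne_zero_iff.mpr
    intro t _
    positivity
  have hd := diagFact n k i hi hk
  field_simp
  rw [hC]
  linear_combination hd

lemma Wrec (n k r i : ℕ) (hr : r+1 ≤ n) :
    Wfun n k r (i+1) = Wfun n k (r+1) (i+1) - Wfun n k r i := by
  set s := n - (r+1) with hs
  have hnr : n - r = s + 1 := by omega
  have hsplit : ∀ j : ℕ, ((s+1+j).choose (s+1) : ℚ)
      = ((s+j).choose s : ℚ) + ((s+j).choose (s+1) : ℚ) := by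
    intro j
    have : s+1+j = (s+j)+1 := by omega
    rw [this]
    exact_mod_cast congrArg (Nat.cast (R := ℚ)) (Nat.choose_succ_succ (s+j) s)
  have e1 : Wfun n k r (i+1)
      = Wfun n k (r+1) (i+1)
        + ∑ j ∈ Finset.range (i+2), (-1:ℚ)^j * ((s+j).choose (s+1) : ℚ) * pfun n (i+1-j) k := by
    rw [Wfun, Wfun, hnr, hs, ← Finset.sum_add_distrib]
    apply Finset.sum_congr rfl
    intro j _
    rw [hsplit j]
    ring
  have e2 : ∑ j ∈ Finset.range (i+2), (-1:ℚ)^j * ((s+j).choose (s+1) : ℚ) * pfun n (i+1-j) k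
      = - Wfun n k r i := by
    rw [Finset.sum_range_succ']
    simp only [Nat.choose_succ_self, Nat.cast_zero, mul_zero, zero_mul, add_zero, pow_zero, one_mul,
      Nat.add_zero]
    rw [Wfun, hnr, ← Finset.sum_neg_distrib]
    apply Finset.sum_congr rfl
    intro j _
    have h1 : i + 1 - (j+1) = i - j := by omega
    have h2 : s + (j+1) = s + 1 + j := by omega
    rw [h1, h2, pow_succ]
    ring
  rw [e1, e2]
  ring

lemma Gmain (n k : ℕ) (hk : 1 ≤ k) :
    ∀ i, i ≤ n → ∀ r, r ≤ i → Wfun n k r i = (-1:ℚ)^i * ((n+k+i-r).choose (n-r) : ℚ) := by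
  intro i
  induction i with
  | zero =>
    intro hi r hr
    have hr0 : r = 0 := by omega
    subst hr0
    simpa using diag n k 0 (by omega) hk
  | succ i ih =>
    intro hi1
    suffices h : ∀ d r, r + d = i+1 → Wfun n k r (i+1) = (-1:ℚ)^(i+1) * ((n+k+(i+1)-r).choose (n-r) : ℚ) by
      intro r hr
      exact h ((i+1)-r) r (by omega)
    intro d
    induction d with
    | zero =>
      intro r hr0
      have : r = i+1 := by omega
      subst this
      have hd := diag n k (i+1) hi1 hk
      have e : n+k+(i+1)-(i+1) = n+k := by omega
      rw [e]
      exact hd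
    | succ d ihd =>
      intro r hrd
      have h1 := ihd (r+1) (by omega)
      have h2 := ih (by omega) r (by omega)
      have h3 := Wrec n k r i (by omega)
      rw [h3, h1, h2]
      have ha : n+k+(i+1)-(r+1) = n+k+i-r := by omega
      have hb : n+k+(i+1)-r = (n+k+i-r)+1 := by omega
      have hc : n - r = (n-(r+1))+1 := by omega
      rw [ha, hb, hc]
      rw [Nat.choose_succ_succ (n+k+i-r) (n-(r+1))]
      push_cast
      ring

/-- The identity
`p_n^{(i)}(k) = Σ_{j=1}^{i} (-1)^{j-1} C(n+j,n) p_n^{(i-j)}(k) + (-1)^i C(n+k+i,n)`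
for `n ≥ 1`, `0 ≤ i ≤ n` and `k ≥ 1`. -/
theorem stmt2 (n i k : ℕ) (hn : 1 ≤ n) (hi : i ≤ n) (hk : 1 ≤ k) :
    pfun n i k =
      (∑ j ∈ Finset.Icc 1 i, (-1 : ℚ) ^ (j - 1) * ((n + j).choose n : ℚ) * pfun n (i - j) k)
        + (-1 : ℚ) ^ i * ((n + k + i).choose n : ℚ) := by
  have hG := Gmain n k hk i hi 0 (Nat.zero_le i)
  simp only [Nat.sub_zero] at hG
  have hsum : Wfun n k 0 i
      = pfun n i k + ∑ j ∈ Finset.Icc 1 i, (-1:ℚ)^j * ((n+j).choose n : ℚ) * pfun n (i-j) k := by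
    rw [Wfun]
    simp only [Nat.sub_zero]
    rw [Finset.range_eq_Ico, ← Finset.Ico_add_one_right_eq_Icc 1 i,
      Finset.sum_eq_sum_Ico_succ_bot (by omega : 0 < i + 1)]
    simp [Nat.choose_self]
  have hneg : ∑ j ∈ Finset.Icc 1 i, (-1:ℚ)^(j-1) * ((n+j).choose n : ℚ) * pfun n (i-j) k
      = - ∑ j ∈ Finset.Icc 1 i, (-1:ℚ)^j * ((n+j).choose n : ℚ) * pfun n (i-j) k := by
    rw [← Finset.sum_neg_distrib]
    apply Finset.sum_congr rfl
    intro j hj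
    have hj1 : 1 ≤ j := (Finset.mem_Icc.mp hj).1
    have : (-1:ℚ)^j = -(-1:ℚ)^(j-1) := by
      conv_lhs => rw [← Nat.sub_add_cancel hj1]
      rw [pow_succ]
      ring
    rw [this]
    ring
  rw [hneg]
  rw [hsum] at hG
  linarith [hG]
end

section
/- Over R = k[x₀,x₁,x₂], the truncation R_{≥k} of R (as a module over itself) at degree k ≥ 0 has minimal free resolution 0 → R(-k-2)^{(k²+k)/2} → R(-k-1)^{k²+2k} → R(-k)^{(k²+3k+2)/2} → R_{≥k} → 0. -/
/-- The polynomial ring `R = k[x₀,…,x_n]`. -/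
abbrev Rp (n : ℕ) (K : Type*) [Field K] := MvPolynomial (Fin (n + 1)) K

/-- `M` has a `k`-linear free resolution with Betti numbers `β i`:
a free resolution `⋯ → R^{β 1} → R^{β 0} → M → 0` whose differentials are
matrices of linear forms (automatically minimal). -/
def HasLinResol (n : ℕ) (K : Type*) [Field K] (M : Type*)
    [AddCommGroup M] [Module (Rp n K) M] (β : ℕ → ℕ) : Prop :=
  ∃ (A : (i : ℕ) → Matrix (Fin (β i)) (Fin (β (i + 1))) (Rp n K))
    (π : (Fin (β 0) → Rp n K) →ₗ[Rp n K] M),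
    (∀ i r c, ((A i) r c).IsHomogeneous 1) ∧
    Function.Surjective π ∧
    Function.Exact (A 0).mulVecLin π ∧
    ∀ i, Function.Exact (A (i + 1)).mulVecLin (A i).mulVecLin

/-- The irrelevant maximal ideal `𝔪 = (x₀,x₁,x₂)` of `k[x₀,x₁,x₂]`. -/
noncomputable def irrIdeal2 (K : Type*) [Field K] : Ideal (Rp 2 K) :=
  Ideal.span (Set.range MvPolynomial.X)

namespace Stmt7
open MvPolynomial

noncomputable section
variable (K : Type*) [Field K] (k : ℕ)

/-- monomial x^p y^q z^r -/
def mono (p q r : ℕ) : Rp 2 K := X 0 ^ p * X 1 ^ q * X 2 ^ r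

def IdxF (n : ℕ) : Finset (ℕ × ℕ) :=
  ((Finset.range n) ×ˢ (Finset.range n)).filter fun p => p.1 + p.2 < n

lemma mem_IdxF {n : ℕ} {p : ℕ × ℕ} : p ∈ IdxF n ↔ p.1 + p.2 < n := by
  simp only [IdxF, Finset.mem_filter, Finset.mem_product, Finset.mem_range]
  omega

/-- index triangle: pairs (b,c) with b+c < n -/
abbrev Idx (n : ℕ) : Type := {p : ℕ × ℕ // p.1 + p.2 < n}

instance (n : ℕ) : Fintype (Idx n) := Fintype.ofFinset (IdxF n) (fun _ => mem_IdxF)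

abbrev I0 := Idx (k+1)
abbrev I1 := (Idx k ⊕ Idx k) ⊕ Fin k
abbrev I2 := Idx k

lemma sum_id_choose (n : ℕ) : (∑ m ∈ Finset.range n, (m + 1)) = (n+1).choose 2 := by
  induction n with
  | zero => simp
  | succ n ih =>
      rw [Finset.sum_range_succ, ih, Nat.choose_succ_succ (n+1) 1]
      simp [Nat.add_comm]
lemma card_Idx (n : ℕ) : Fintype.card (Idx n) = (n+1).choose 2 := by
  rw [Fintype.card_of_subtype (IdxF n) (fun _ => mem_IdxF)]
  have h : IdxF n = (Finset.range n).biUnion (fun m => Finset.HasAntidiagonal.antidiagonal m) := by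
    ext p
    simp only [mem_IdxF, Finset.mem_biUnion, Finset.mem_range, Finset.HasAntidiagonal.mem_antidiagonal]
    exact ⟨fun h => ⟨p.1 + p.2, h, rfl⟩, fun ⟨m, hm, he⟩ => by omega⟩
  rw [h, Finset.card_biUnion, ← sum_id_choose]
  · simp [Finset.Nat.card_antidiagonal]
  · intro i _ j _ hij
    simp only [Finset.disjoint_left, Finset.HasAntidiagonal.mem_antidiagonal]
    intro a h1 h2; omega

lemma card_I0 : Fintype.card (I0 k) = (k + 2).choose 2 := card_Idx (k+1)

lemma card_I1 : Fintype.card (I1 k) = k ^ 2 + 2 * k := by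
  simp only [I1, Fintype.card_sum, Fintype.card_fin, card_Idx, Nat.choose_two_right]
  have h2 : 2 ∣ k * (k + 1) := (Nat.even_mul_succ_self k).two_dvd
  have h3 : (k + 1) * (k + 1 - 1) = k * (k + 1) := by rw [Nat.add_sub_cancel]; ring
  have h5 : k * (k + 1) = k * k + k := by ring
  have h4 : k ^ 2 = k * k := sq k
  rw [h3]
  omega

lemma card_I2 : Fintype.card (I2 k) = (k + 1).choose 2 := card_Idx k


/-! ### mono lemmas -/

lemma X0_mul_mono (p q r : ℕ) : X 0 * mono K p q r = mono K (p+1) q r := by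
  unfold mono; ring
lemma X1_mul_mono (p q r : ℕ) : X 1 * mono K p q r = mono K p (q+1) r := by
  unfold mono; ring
lemma X2_mul_mono (p q r : ℕ) : X 2 * mono K p q r = mono K p q (r+1) := by
  unfold mono; ring
lemma mono_mul_mono (p q r p' q' r' : ℕ) :
    mono K p q r * mono K p' q' r' = mono K (p+p') (q+q') (r+r') := by
  unfold mono; ring

/-! ### the differentials -/

/-- first differential: columns indexed by `I1` (A/B/C syzygies), rows by `I0`. -/
def d1 : Matrix (I0 k) (I1 k) (Rp 2 K) := fun m j =>
  match j with
  | .inl (.inl a) => (if m.1 = (a.1.1 + 1, a.1.2) then X 0 else 0)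
      + (if m.1 = a.1 then -X 1 else 0)
  | .inl (.inr b) => (if m.1 = (b.1.1, b.1.2 + 1) then X 1 else 0)
      + (if m.1 = (b.1.1 + 1, b.1.2) then -X 2 else 0)
  | .inr c => (if m.1 = (0, (c : ℕ) + 1) then X 0 else 0)
      + (if m.1 = (0, (c : ℕ)) then -X 2 else 0)

/-- second differential: columns indexed by `I2` (second syzygies `T b c`). -/
def d2 : Matrix (I1 k) (I2 k) (Rp 2 K) := fun i t =>
  match i with
  | .inl (.inl a) => (if 0 < a.1.2 ∧ t.1 = (a.1.1 + 1, a.1.2 - 1) then -X 1 else 0)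
      + (if t.1 = a.1 then X 2 else 0)
  | .inl (.inr b) => (if t.1 = b.1 then X 0 else 0)
      + (if t.1 = (b.1.1 + 1, b.1.2) then -X 1 else 0)
  | .inr c => if t.1 = (0, (c : ℕ)) then -X 1 else 0

/-! ### delta functions -/

/-- delta function on `I0` at `(b,c)` -/
def e0f (b c : ℕ) : I0 k → Rp 2 K := fun m => if m.1 = (b, c) then 1 else 0

def dA (b c : ℕ) : I1 k → Rp 2 K := fun j =>
  match j with
  | .inl (.inl a) => if a.1 = (b, c) then 1 else 0
  | _ => 0
def dB (b c : ℕ) : I1 k → Rp 2 K := fun j =>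
  match j with
  | .inl (.inr b') => if b'.1 = (b, c) then 1 else 0
  | _ => 0
def dC (c : ℕ) : I1 k → Rp 2 K := fun j =>
  match j with
  | .inr c' => if (c' : ℕ) = c then 1 else 0
  | _ => 0

/-- delta on `I2` -/
def dT (b c : ℕ) : I2 k → Rp 2 K := fun t => if t.1 = (b, c) then 1 else 0

/-! ### sum collapse -/

lemma sum_ite_Idx {n : ℕ} (pr : ℕ × ℕ) (f : Idx n → Rp 2 K) :
    (∑ a : Idx n, if a.1 = pr then f a else 0) =
      if h : pr.1 + pr.2 < n then f ⟨pr, h⟩ else 0 := by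
  split
  next h =>
    rw [Finset.sum_eq_single (⟨pr, h⟩ : Idx n)]
    · simp
    · intro a _ ha
      rw [if_neg]
      exact fun e => ha (Subtype.ext e)
    · intro h'; exact absurd (Finset.mem_univ _) h'
  next h =>
    apply Finset.sum_eq_zero
    intro a _
    rw [if_neg]
    intro e
    exact h (e ▸ a.2)

lemma sum_ite_Fin {n : ℕ} (c0 : ℕ) (f : Fin n → Rp 2 K) :
    (∑ c : Fin n, if (c : ℕ) = c0 then f c else 0) =
      if h : c0 < n then f ⟨c0, h⟩ else 0 := by
  split
  next h =>
    rw [Finset.sum_eq_single (⟨c0, h⟩ : Fin n)]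
    · simp
    · intro a _ ha
      rw [if_neg]
      exact fun e => ha (Fin.ext e)
    · intro h'; exact absurd (Finset.mem_univ _) h'
  next h =>
    apply Finset.sum_eq_zero
    intro a _
    rw [if_neg]
    intro e
    exact h (e ▸ a.2)

/-! ### mulVecLin on deltas -/

lemma mulVecLin_dA {b c : ℕ} (h : b + c < k) :
    (d1 K k).mulVecLin (dA K k b c) =
      (X 0 : Rp 2 K) • e0f K k (b+1) c - (X 1 : Rp 2 K) • e0f K k b c := by
  funext m
  obtain ⟨⟨m1, m2⟩, hm⟩ := m
  simp only [Matrix.mulVecLin_apply, Matrix.mulVec, dotProduct]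
  rw [Fintype.sum_sum_type, Fintype.sum_sum_type]
  simp only [dA, mul_ite, mul_one, mul_zero, Finset.sum_const_zero, add_zero,
    sum_ite_Idx, dif_pos h, d1, e0f, Pi.sub_apply, Pi.smul_apply, smul_eq_mul,
    Prod.mk.injEq]
  split_ifs <;> (try ring) <;> omega

lemma mulVecLin_dB {b c : ℕ} (h : b + c < k) :
    (d1 K k).mulVecLin (dB K k b c) =
      (X 1 : Rp 2 K) • e0f K k b (c+1) - (X 2 : Rp 2 K) • e0f K k (b+1) c := by
  funext m
  obtain ⟨⟨m1, m2⟩, hm⟩ := m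
  simp only [Matrix.mulVecLin_apply, Matrix.mulVec, dotProduct]
  rw [Fintype.sum_sum_type, Fintype.sum_sum_type]
  simp only [dB, mul_ite, mul_one, mul_zero, Finset.sum_const_zero, add_zero, zero_add,
    sum_ite_Idx, dif_pos h, d1, e0f, Pi.sub_apply, Pi.smul_apply, smul_eq_mul,
    Prod.mk.injEq]
  split_ifs <;> (try ring) <;> omega

lemma mulVecLin_dC {c : ℕ} (h : c < k) :
    (d1 K k).mulVecLin (dC K k c) =
      (X 0 : Rp 2 K) • e0f K k 0 (c+1) - (X 2 : Rp 2 K) • e0f K k 0 c := by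
  funext m
  obtain ⟨⟨m1, m2⟩, hm⟩ := m
  simp only [Matrix.mulVecLin_apply, Matrix.mulVec, dotProduct]
  rw [Fintype.sum_sum_type, Fintype.sum_sum_type]
  simp only [dC, mul_ite, mul_one, mul_zero, Finset.sum_const_zero, add_zero, zero_add,
    sum_ite_Fin, dif_pos h, d1, e0f, Pi.sub_apply, Pi.smul_apply, smul_eq_mul,
    Prod.mk.injEq]
  split_ifs <;> (try ring) <;> omega

/-- the column of `d2` at `T (b,c)`, as a combination of deltas. -/
lemma d2_col {b c : ℕ} (h : b + c < k) :
    (d2 K k).mulVecLin (dT K k b c) =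
      (X 0 : Rp 2 K) • dB K k b c + (X 2 : Rp 2 K) • dA K k b c
      - (if 0 < b then (X 1 : Rp 2 K) • dA K k (b-1) (c+1) + (X 1 : Rp 2 K) • dB K k (b-1) c
         else (X 1 : Rp 2 K) • dC K k c) := by
  by_cases hb0 : 0 < b
  · rw [if_pos hb0]
    funext j
    simp only [Matrix.mulVecLin_apply, Matrix.mulVec, dotProduct, dT, mul_ite, mul_one,
      mul_zero, sum_ite_Idx, dif_pos h]
    rcases j with ((⟨⟨a1, a2⟩, ha⟩ | ⟨⟨b1, b2⟩, hb⟩) | ⟨c1, hc⟩) <;>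
      simp only [d2, dA, dB, dC, Pi.sub_apply, Pi.add_apply, Pi.smul_apply, smul_eq_mul,
        mul_ite, mul_one, mul_zero, Prod.mk.injEq] <;>
      split_ifs <;> (try ring) <;> omega
  · rw [if_neg hb0]
    funext j
    simp only [Matrix.mulVecLin_apply, Matrix.mulVec, dotProduct, dT, mul_ite, mul_one,
      mul_zero, sum_ite_Idx, dif_pos h]
    rcases j with ((⟨⟨a1, a2⟩, ha⟩ | ⟨⟨b1, b2⟩, hb⟩) | ⟨c1, hc⟩) <;>
      simp only [d2, dA, dB, dC, Pi.sub_apply, Pi.add_apply, Pi.smul_apply, smul_eq_mul,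
        mul_ite, mul_one, mul_zero, Prod.mk.injEq] <;>
      split_ifs <;> (try ring) <;> omega


/-! ### canonical divisor data -/

def aC (P : ℕ) : ℕ := min P k
def bC (P Q : ℕ) : ℕ := min Q (k - aC k P)
def cC (P Q : ℕ) : ℕ := k - aC k P - bC k P Q

/-- the `K`-linear section of `π` on monomial `x^P y^Q z^R₂` (of degree `≥ k`). -/
def sFun (P Q R₂ : ℕ) : I0 k → Rp 2 K := fun m =>
  if m.1 = (bC k P Q, cC k P Q)
  then mono K (P - aC k P) (Q - bC k P Q) (R₂ - cC k P Q) else 0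

/-! ### the contracting homotopy on `F₀`, on basis elements -/

def S0core (p q r b c : ℕ) : I1 k → Rp 2 K :=
  if h1 : 0 < p ∧ 0 < b + c then
    if hb : 0 < b then
      mono K (p-1) q r • dA K k (b-1) c + S0core (p-1) (q+1) r (b-1) c
    else
      mono K (p-1) q r • dC K k (c-1) + S0core (p-1) q (r+1) 0 (c-1)
  else if h2 : 0 < q ∧ 0 < c then
    mono K p (q-1) r • dB K k b (c-1) + S0core p (q-1) (r+1) (b+1) (c-1)
  else 0
termination_by b + 2*c
decreasing_by all_goals omega

/-- Key homotopy identity on basis elements. -/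
lemma key1 : ∀ n p q r b c, b + 2*c = n → b + c ≤ k →
    (d1 K k).mulVecLin (S0core K k p q r b c)
      = (fun m : I0 k => if m.1 = (b, c) then mono K p q r else 0)
        - sFun K k (p + (k - b - c)) (q + b) (r + c) := by
  intro n
  induction n using Nat.strong_induction_on with
  | _ n IH =>
  intro p q r b c hn hbc
  rw [S0core]
  split_ifs with h1 hb h2
  · -- case 1, b > 0
    obtain ⟨p, rfl⟩ : ∃ p', p = p' + 1 := ⟨p - 1, by omega⟩
    obtain ⟨b, rfl⟩ : ∃ b', b = b' + 1 := ⟨b - 1, by omega⟩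
    simp only [Nat.add_sub_cancel]
    rw [map_add, map_smul, mulVecLin_dA K k (show b + c < k by omega),
      IH (b + 2*c) (by omega) (p) (q+1) r b c rfl (by omega)]
    have e1 : p + (k - b - c) = (p + 1) + (k - (b+1) - c) := by omega
    have e2 : (q + 1) + b = q + (b + 1) := by omega
    rw [e1, e2]
    funext m
    simp only [Pi.add_apply, Pi.sub_apply, Pi.smul_apply, smul_eq_mul, e0f,
      mul_ite, mul_one, mul_zero, Prod.mk.injEq]
    split_ifs <;> (try ring) <;> (try omega) <;>
      (unfold mono; push_cast; ring_nf) <;> omega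
  · -- case 1, b = 0, c > 0
    obtain ⟨p, rfl⟩ : ∃ p', p = p' + 1 := ⟨p - 1, by omega⟩
    obtain ⟨c, rfl⟩ : ∃ c', c = c' + 1 := ⟨c - 1, by omega⟩
    have hb0 : b = 0 := by omega
    subst hb0
    simp only [Nat.add_sub_cancel]
    rw [map_add, map_smul, mulVecLin_dC K k (show c < k by omega),
      IH (0 + 2*c) (by omega) p q (r+1) 0 c rfl (by omega)]
    have e1 : p + (k - 0 - c) = (p + 1) + (k - 0 - (c+1)) := by omega
    have e2 : q + 0 = q := by omega
    have e3 : (r + 1) + c = r + (c + 1) := by omega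
    rw [e1, e2, e3]
    funext m
    simp only [Pi.add_apply, Pi.sub_apply, Pi.smul_apply, smul_eq_mul, e0f,
      mul_ite, mul_one, mul_zero, Prod.mk.injEq]
    split_ifs <;> (try ring) <;> (try omega) <;>
      (unfold mono; push_cast; ring_nf) <;> omega
  · -- case 2
    obtain ⟨q, rfl⟩ : ∃ q', q = q' + 1 := ⟨q - 1, by omega⟩
    obtain ⟨c, rfl⟩ : ∃ c', c = c' + 1 := ⟨c - 1, by omega⟩
    simp only [Nat.add_sub_cancel]
    rw [map_add, map_smul, mulVecLin_dB K k (show b + c < k by omega),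
      IH (b + 1 + 2*c) (by omega) p q (r+1) (b+1) c rfl (by omega)]
    have e1 : p + (k - (b+1) - c) = p + (k - b - (c+1)) := by omega
    have e2 : q + (b + 1) = (q + 1) + b := by omega
    have e3 : (r + 1) + c = r + (c + 1) := by omega
    rw [e1, e2, e3]
    funext m
    simp only [Pi.add_apply, Pi.sub_apply, Pi.smul_apply, smul_eq_mul, e0f,
      mul_ite, mul_one, mul_zero, Prod.mk.injEq]
    split_ifs <;> (try ring) <;> (try omega) <;>
      (unfold mono; push_cast; ring_nf) <;> omega
  · -- normal form
    rw [map_zero]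
    have hb : bC k (p + (k - b - c)) (q + b) = b := by
      unfold bC aC; omega
    have hc : cC k (p + (k - b - c)) (q + b) = c := by
      unfold cC bC aC; omega
    have hP : (p + (k - b - c)) - aC k (p + (k - b - c)) = p := by
      unfold aC; omega
    have hQ : (q + b) - bC k (p + (k - b - c)) (q + b) = q := by
      unfold bC aC; omega
    have hR : (r + c) - cC k (p + (k - b - c)) (q + b) = r := by
      unfold cC bC aC; omega
    funext m
    simp only [Pi.zero_apply, Pi.sub_apply, sFun, hb, hc, hP, hQ, hR]
    split_ifs <;> simp


/-! ### bundled linear maps -/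

def fexp (P Q R₂ : ℕ) : Fin 3 →₀ ℕ :=
  Finsupp.single 0 P + Finsupp.single 1 Q + Finsupp.single 2 R₂

lemma fexp_eq (u : Fin 3 →₀ ℕ) : fexp (u 0) (u 1) (u 2) = u := by
  ext i
  fin_cases i <;> simp [fexp, Finsupp.single_apply] <;> decide

lemma monomial_fexp (P Q R₂ : ℕ) :
    (monomial (fexp P Q R₂) (1 : K)) = mono K P Q R₂ := by
  unfold fexp mono
  rw [← one_mul (1:K), ← one_mul (1:K), ← MvPolynomial.monomial_mul, ← MvPolynomial.monomial_mul]
  rw [X_pow_eq_monomial, X_pow_eq_monomial, X_pow_eq_monomial]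
  simp

lemma fexp_apply (P Q R₂ : ℕ) :
    fexp P Q R₂ 0 = P ∧ fexp P Q R₂ 1 = Q ∧ fexp P Q R₂ 2 = R₂ := by
  refine ⟨?_, ?_, ?_⟩ <;> simp [fexp, Finsupp.single_apply] <;> decide

/-- `K`-linear section of `π₀`. -/
def sK : Rp 2 K →ₗ[K] (I0 k → Rp 2 K) :=
  (basisMonomials (Fin 3) K).constr K (fun u => sFun K k (u 0) (u 1) (u 2))

lemma sK_mono (P Q R₂ : ℕ) : sK K k (mono K P Q R₂) = sFun K k P Q R₂ := by
  rw [← monomial_fexp, show ((monomial (fexp P Q R₂)) (1:K)) = basisMonomials (Fin 3) K (fexp P Q R₂) from rfl,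
    sK, Module.Basis.constr_basis]
  rw [(fexp_apply P Q R₂).1, (fexp_apply P Q R₂).2.1, (fexp_apply P Q R₂).2.2]

/-- `K`-linear homotopy `F₀ → F₁`. -/
def s0 : (I0 k → Rp 2 K) →ₗ[K] (I1 k → Rp 2 K) :=
  LinearMap.lsum K (fun _ : I0 k => Rp 2 K) K
    (fun m => (basisMonomials (Fin 3) K).constr K
      (fun u => S0core K k (u 0) (u 1) (u 2) m.1.1 m.1.2))

lemma s0_single (m : I0 k) (P Q R₂ : ℕ) :
    s0 K k (Pi.single m (mono K P Q R₂)) = S0core K k P Q R₂ m.1.1 m.1.2 := by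
  rw [s0, LinearMap.lsum_apply]
  rw [LinearMap.sum_apply]
  rw [Finset.sum_eq_single m]
  · simp only [LinearMap.comp_apply, LinearMap.proj_apply, Pi.single_eq_same]
    rw [← monomial_fexp, show ((monomial (fexp P Q R₂)) (1:K)) = basisMonomials (Fin 3) K (fexp P Q R₂) from rfl,
      Module.Basis.constr_basis]
    rw [(fexp_apply P Q R₂).1, (fexp_apply P Q R₂).2.1, (fexp_apply P Q R₂).2.2]
  · intro m' _ hm'
    simp only [LinearMap.comp_apply, LinearMap.proj_apply, Pi.single_eq_of_ne hm', map_zero]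
  · intro h; exact absurd (Finset.mem_univ _) h

/-- `π₀ : F₀ → R`. -/
def pi0 : (I0 k → Rp 2 K) →ₗ[Rp 2 K] Rp 2 K :=
  LinearMap.lsum (Rp 2 K) (fun _ : I0 k => Rp 2 K) (Rp 2 K)
    (fun m => LinearMap.toSpanSingleton _ _ (mono K (k - m.1.1 - m.1.2) m.1.1 m.1.2))

lemma pi0_single (m : I0 k) (f : Rp 2 K) :
    pi0 K k (Pi.single m f) = f * mono K (k - m.1.1 - m.1.2) m.1.1 m.1.2 := by
  rw [pi0, LinearMap.lsum_apply, LinearMap.sum_apply]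
  rw [Finset.sum_eq_single m]
  · simp [LinearMap.toSpanSingleton_apply, smul_eq_mul]
  · intro m' _ hm'
    simp only [LinearMap.comp_apply, LinearMap.proj_apply, Pi.single_eq_of_ne hm', map_zero]
  · intro h; exact absurd (Finset.mem_univ _) h

lemma single_eq_ite (m : I0 k) (f : Rp 2 K) :
    Pi.single m f = fun m' : I0 k => if m'.1 = m.1 then f else 0 := by
  funext m'
  rw [Pi.single_apply]
  by_cases h : m' = m
  · rw [if_pos h, if_pos (by rw [h])]
  · rw [if_neg h, if_neg (fun e => h (Subtype.ext e))]

/-! ### induction principle for `Pi` of polynomials -/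

lemma pi_induction {ι : Type*} [Fintype ι] [DecidableEq ι] {P : (ι → Rp 2 K) → Prop}
    (h0 : P 0) (hadd : ∀ v w, P v → P w → P (v + w))
    (hs : ∀ (m : ι) (u : Fin 3 →₀ ℕ) (a : K), P (Pi.single m (monomial u a))) :
    ∀ v, P v := by
  intro v
  rw [← Finset.univ_sum_single v]
  apply Finset.sum_induction _ P hadd h0
  intro m _
  generalize v m = f
  induction f using MvPolynomial.induction_on' with
  | monomial u a => exact hs m u a
  | add p q hp hq => rw [Pi.single_add]; exact hadd _ _ hp hq

/-- The homotopy identity on `F₀`. -/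
lemma hom_id (v : I0 k → Rp 2 K) :
    (d1 K k).mulVecLin (s0 K k v) = v - sK K k (pi0 K k v) := by
  induction v using pi_induction with
  | h0 => simp
  | hadd v w hv hw =>
      rw [map_add, map_add, map_add, map_add, hv, hw]
      abel
  | hs m u a =>
      have hmono : (monomial u) (a : K) = a • ((monomial u) (1:K)) := by
        rw [MvPolynomial.smul_monomial, smul_eq_mul, mul_one]
      rw [hmono, Pi.single_smul, map_smul, LinearMap.map_smul_of_tower, LinearMap.map_smul_of_tower, map_smul,
        ← smul_sub]
      congr 1
      rw [← fexp_eq u, monomial_fexp]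
      rw [s0_single, pi0_single, mono_mul_mono,
        key1 K k (m.1.1 + 2*m.1.2) _ _ _ m.1.1 m.1.2 rfl (by omega), sK_mono]
      congr 1
      rw [single_eq_ite]


/-! ### π as a map to the ideal power, and exactness at F₀ -/

lemma mono_mem {b c : ℕ} (h : b + c ≤ k) :
    mono K (k - b - c) b c ∈ irrIdeal2 K ^ k := by
  have hX : ∀ i : Fin 3, (X i : Rp 2 K) ∈ irrIdeal2 K :=
    fun i => Ideal.subset_span ⟨i, rfl⟩
  have h2 : ∀ a' : ℕ, mono K a' b c ∈ irrIdeal2 K ^ (a' + (b + c)) := by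
    intro a'
    rw [pow_add, pow_add]
    unfold mono
    rw [mul_assoc]
    exact Ideal.mul_mem_mul (Ideal.pow_mem_pow (hX 0) _)
      (Ideal.mul_mem_mul (Ideal.pow_mem_pow (hX 1) _) (Ideal.pow_mem_pow (hX 2) _))
  have e : (k - b - c) + (b + c) = k := by omega
  have := h2 (k - b - c)
  rwa [e] at this

lemma pi0_mem (v : I0 k → Rp 2 K) : pi0 K k v ∈ irrIdeal2 K ^ k := by
  rw [pi0, LinearMap.lsum_apply, LinearMap.sum_apply]
  apply Submodule.sum_mem
  intro m _
  simp only [LinearMap.comp_apply, LinearMap.proj_apply, LinearMap.toSpanSingleton_apply]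
  exact Submodule.smul_mem _ _ (mono_mem K k (by omega))

def piM : (I0 k → Rp 2 K) →ₗ[Rp 2 K] ↥(irrIdeal2 K ^ k) :=
  LinearMap.codRestrict (Submodule.restrictScalars _ (irrIdeal2 K ^ k)) (pi0 K k)
    (pi0_mem K k)

lemma pi0_e0f {b c : ℕ} (h : b + c ≤ k) :
    pi0 K k (e0f K k b c) = mono K (k - b - c) b c := by
  have : e0f K k b c = Pi.single (⟨(b,c), by omega⟩ : I0 k) 1 := by
    rw [single_eq_ite]; rfl
  rw [this, pi0_single, one_mul]

lemma mulVecLin_d1_single (j : I1 k) (x : Rp 2 K) :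
    (d1 K k).mulVecLin (Pi.single j x) = fun m => d1 K k m j * x := by
  funext m
  simp only [Matrix.mulVecLin_apply, Matrix.mulVec, dotProduct]
  rw [Finset.sum_eq_single j]
  · rw [Pi.single_eq_same]
  · intro j' _ hj'; rw [Pi.single_eq_of_ne hj', mul_zero]
  · intro h; exact absurd (Finset.mem_univ _) h

lemma d1_col_A (a : Idx k) (x : Rp 2 K) :
    (fun m : I0 k => d1 K k m (.inl (.inl a)) * x)
      = ((X 0 : Rp 2 K) * x) • e0f K k (a.1.1+1) a.1.2
        - ((X 1 : Rp 2 K) * x) • e0f K k a.1.1 a.1.2 := by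
  obtain ⟨⟨a1, a2⟩, ha⟩ := a
  funext m
  simp only [d1, e0f, Pi.sub_apply, Pi.smul_apply, smul_eq_mul, mul_ite, mul_one, mul_zero,
    Prod.mk.injEq]
  split_ifs <;> (try ring) <;> omega

lemma d1_col_B (b : Idx k) (x : Rp 2 K) :
    (fun m : I0 k => d1 K k m (.inl (.inr b)) * x)
      = ((X 1 : Rp 2 K) * x) • e0f K k b.1.1 (b.1.2+1)
        - ((X 2 : Rp 2 K) * x) • e0f K k (b.1.1+1) b.1.2 := by
  obtain ⟨⟨b1, b2⟩, hb⟩ := b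
  funext m
  simp only [d1, e0f, Pi.sub_apply, Pi.smul_apply, smul_eq_mul, mul_ite, mul_one, mul_zero,
    Prod.mk.injEq]
  split_ifs <;> (try ring) <;> omega

lemma d1_col_C (c : Fin k) (x : Rp 2 K) :
    (fun m : I0 k => d1 K k m (.inr c) * x)
      = ((X 0 : Rp 2 K) * x) • e0f K k 0 ((c:ℕ)+1)
        - ((X 2 : Rp 2 K) * x) • e0f K k 0 (c:ℕ) := by
  funext m
  simp only [d1, e0f, Pi.sub_apply, Pi.smul_apply, smul_eq_mul, mul_ite, mul_one, mul_zero,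
    Prod.mk.injEq]
  split_ifs <;> (try ring) <;> omega

lemma pi0_d1 (w : I1 k → Rp 2 K) : pi0 K k ((d1 K k).mulVecLin w) = 0 := by
  induction w using pi_induction with
  | h0 => simp
  | hadd v w hv hw => rw [map_add, map_add, hv, hw, add_zero]
  | hs j u a =>
      rw [mulVecLin_d1_single]
      rcases j with ((a' | b') | c')
      · obtain ⟨⟨a1, a2⟩, ha⟩ := a'
        rw [d1_col_A, map_sub, map_smul, map_smul, pi0_e0f K k (by omega : a1+1+a2 ≤ k),
          pi0_e0f K k (by omega : a1+a2 ≤ k)]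
        have e : k - a1 - a2 = (k - (a1+1) - a2) + 1 := by omega
        rw [e, show k - (a1+1) - a2 = k - (a1+1) - a2 from rfl]
        unfold mono
        simp only [smul_eq_mul]
        ring
      · obtain ⟨⟨b1, b2⟩, hb⟩ := b'
        rw [d1_col_B, map_sub, map_smul, map_smul, pi0_e0f K k (by omega : b1+(b2+1) ≤ k),
          pi0_e0f K k (by omega : b1+1+b2 ≤ k)]
        have e2 : k - (b1+1) - b2 = k - b1 - (b2+1) := by omega
        rw [e2]
        unfold mono
        simp only [smul_eq_mul]
        ring
      · obtain ⟨c1, hc⟩ := c'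
        rw [d1_col_C, map_sub, map_smul, map_smul, pi0_e0f K k (by omega : 0+(c1+1) ≤ k),
          pi0_e0f K k (by omega : 0+c1 ≤ k)]
        have e : k - 0 - c1 = (k - 0 - (c1+1)) + 1 := by omega
        rw [e]
        unfold mono
        simp only [smul_eq_mul]
        ring

lemma exact_d1_piM : Function.Exact (d1 K k).mulVecLin (piM K k) := by
  intro v
  constructor
  · intro hv
    have h0 : pi0 K k v = 0 := congrArg Subtype.val hv
    exact ⟨s0 K k v, by rw [hom_id, h0, map_zero, sub_zero]⟩
  · rintro ⟨w, rfl⟩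
    exact Subtype.ext (pi0_d1 K k w)


/-! ### helpers: singles as deltas -/

lemma smul_e0f_eq_single {b c : ℕ} (h : b + c ≤ k) (f : Rp 2 K) :
    f • e0f K k b c = Pi.single (⟨(b,c), by omega⟩ : I0 k) f := by
  rw [single_eq_ite]
  funext m'
  simp only [Pi.smul_apply, e0f, smul_eq_mul, mul_ite, mul_one, mul_zero]

lemma single_dA {b c : ℕ} (h : b + c < k) (f : Rp 2 K) :
    Pi.single (Sum.inl (Sum.inl ⟨(b,c), h⟩) : I1 k) f = f • dA K k b c := by
  funext j
  rcases j with ((a' | b') | c') <;>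
    simp only [dA, Pi.smul_apply, smul_eq_mul, mul_ite, mul_one, mul_zero, Pi.single_apply,
      Sum.inl.injEq, Subtype.mk.injEq]
  · congr 1
    simp only [eq_iff_iff, Subtype.ext_iff]
  · rw [if_neg (by simp)]
  · rw [if_neg (by simp)]

lemma single_dB {b c : ℕ} (h : b + c < k) (f : Rp 2 K) :
    Pi.single (Sum.inl (Sum.inr ⟨(b,c), h⟩) : I1 k) f = f • dB K k b c := by
  funext j
  rcases j with ((a' | b') | c') <;>
    simp only [dB, Pi.smul_apply, smul_eq_mul, mul_ite, mul_one, mul_zero, Pi.single_apply,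
      Sum.inl.injEq, Sum.inr.injEq, Subtype.mk.injEq]
  · rw [if_neg (by simp)]
  · congr 1
    simp only [eq_iff_iff, Subtype.ext_iff]
  · rw [if_neg (by simp)]

lemma single_dC {c : ℕ} (h : c < k) (f : Rp 2 K) :
    Pi.single (Sum.inr ⟨c, h⟩ : I1 k) f = f • dC K k c := by
  funext j
  rcases j with ((a' | b') | c') <;>
    simp only [dC, Pi.smul_apply, smul_eq_mul, mul_ite, mul_one, mul_zero, Pi.single_apply,
      Sum.inr.injEq]
  · rw [if_neg (by simp)]
  · rw [if_neg (by simp)]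
  · congr 1
    simp only [eq_iff_iff, Fin.ext_iff]

lemma single_dT {b c : ℕ} (h : b + c < k) (f : Rp 2 K) :
    Pi.single (⟨(b,c), h⟩ : I2 k) f = f • dT K k b c := by
  funext t
  simp only [dT, Pi.smul_apply, smul_eq_mul, mul_ite, mul_one, mul_zero, Pi.single_apply]
  congr 1
  simp only [eq_iff_iff, Subtype.ext_iff]

/-! ### unfolding lemmas for `S0core` -/

lemma S0core_case1A (P Q R₂ b c : ℕ) :
    S0core K k (P+1) Q R₂ (b+1) c
      = mono K P Q R₂ • dA K k b c + S0core K k P (Q+1) R₂ b c := by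
  rw [S0core, dif_pos ⟨by omega, by omega⟩, dif_pos (by omega)]
  simp only [Nat.add_sub_cancel]

lemma S0core_case1C (P Q R₂ c : ℕ) :
    S0core K k (P+1) Q R₂ 0 (c+1)
      = mono K P Q R₂ • dC K k c + S0core K k P Q (R₂+1) 0 c := by
  rw [S0core, dif_pos ⟨by omega, by omega⟩, dif_neg (by omega)]
  simp only [Nat.add_sub_cancel]

lemma S0core_case2 (Q R₂ b c : ℕ) :
    S0core K k 0 (Q+1) R₂ b (c+1)
      = mono K 0 Q R₂ • dB K k b c + S0core K k 0 Q (R₂+1) (b+1) c := by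
  rw [S0core, dif_neg (by omega), dif_pos ⟨by omega, by omega⟩]
  simp only [Nat.add_sub_cancel]

/-! ### `d1 ∘ d2 = 0` -/

lemma mulVecLin_d2_single (t : I2 k) (x : Rp 2 K) :
    (d2 K k).mulVecLin (Pi.single t x) = x • ((d2 K k).mulVecLin (dT K k t.1.1 t.1.2)) := by
  obtain ⟨⟨b, c⟩, h⟩ := t
  rw [single_dT K k h, map_smul]

lemma d1_d2_col (b c : ℕ) (h : b + c < k) :
    (d1 K k).mulVecLin ((d2 K k).mulVecLin (dT K k b c)) = 0 := by
  rw [d2_col K k h]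
  by_cases hb : 0 < b
  · obtain ⟨b, rfl⟩ : ∃ b', b = b' + 1 := ⟨b - 1, by omega⟩
    rw [if_pos hb]
    simp only [Nat.add_sub_cancel]
    rw [map_sub, map_add, map_add, map_smul, map_smul, map_smul, map_smul,
      mulVecLin_dA K k (by omega), mulVecLin_dB K k (by omega),
      mulVecLin_dA K k (by omega : b + (c+1) < k), mulVecLin_dB K k (by omega : b + c < k)]
    funext m
    simp only [Pi.sub_apply, Pi.add_apply, Pi.smul_apply, Pi.zero_apply, smul_eq_mul, e0f,
      mul_ite, mul_one, mul_zero]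
    split_ifs <;> ring
  · have hb0 : b = 0 := by omega
    subst hb0
    rw [if_neg hb]
    rw [map_sub, map_add, map_smul, map_smul, map_smul,
      mulVecLin_dA K k (by omega), mulVecLin_dB K k (by omega), mulVecLin_dC K k (by omega)]
    funext m
    simp only [Pi.sub_apply, Pi.add_apply, Pi.smul_apply, Pi.zero_apply, smul_eq_mul, e0f,
      mul_ite, mul_one, mul_zero]
    split_ifs <;> ring

lemma d1_d2 (w : I2 k → Rp 2 K) :
    (d1 K k).mulVecLin ((d2 K k).mulVecLin w) = 0 := by
  induction w using pi_induction with
  | h0 => simp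
  | hadd v w hv hw => rw [map_add, map_add, hv, hw, add_zero]
  | hs t u a =>
      obtain ⟨⟨b, c⟩, h⟩ := t
      rw [single_dT K k h, map_smul, map_smul, d1_d2_col K k b c h, smul_zero]

/-! ### `ker d1 ⊆ range d2` -/

lemma key2 (P : ℕ) : ∀ Q R₂ b c, b + c < k →
    mono K P Q R₂ • dB K k b c - S0core K k P (Q+1) R₂ b (c+1) + S0core K k P Q (R₂+1) (b+1) c
      ∈ LinearMap.range (d2 K k).mulVecLin := by
  induction P with
  | zero =>
      intro Q R₂ b c h
      rw [S0core_case2]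
      have e : mono K 0 Q R₂ • dB K k b c - (mono K 0 Q R₂ • dB K k b c + S0core K k 0 Q (R₂+1) (b+1) c)
          + S0core K k 0 Q (R₂+1) (b+1) c = 0 := by abel
      rw [e]
      exact zero_mem _
  | succ P IH =>
      intro Q R₂ b c h
      by_cases hb : 0 < b
      · obtain ⟨b, rfl⟩ : ∃ b', b = b' + 1 := ⟨b - 1, by omega⟩
        rw [S0core_case1A, S0core_case1A]
        have e : mono K (P+1) Q R₂ • dB K k (b+1) c
            - (mono K P (Q+1) R₂ • dA K k b (c+1) + S0core K k P (Q+1+1) R₂ b (c+1))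
            + (mono K P Q (R₂+1) • dA K k (b+1) c + S0core K k P (Q+1) (R₂+1) (b+1) c)
            = mono K P Q R₂ • ((d2 K k).mulVecLin (dT K k (b+1) c))
              + (mono K P (Q+1) R₂ • dB K k b c - S0core K k P (Q+1+1) R₂ b (c+1)
                 + S0core K k P (Q+1) (R₂+1) (b+1) c) := by
          rw [d2_col K k h, if_pos (by omega)]
          simp only [Nat.add_sub_cancel]
          funext j
          simp only [Pi.add_apply, Pi.sub_apply, Pi.smul_apply, smul_eq_mul]
          unfold mono
          ring
        rw [e]
        refine add_mem ⟨mono K P Q R₂ • dT K k (b+1) c, ?_⟩ (IH (Q+1) R₂ b c (by omega))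
        rw [map_smul]
      · have hb0 : b = 0 := by omega
        subst hb0
        rw [S0core_case1C, show (0:ℕ) + 1 = 0 + 1 from rfl, S0core_case1A]
        have e : mono K (P+1) Q R₂ • dB K k 0 c
            - (mono K P (Q+1) R₂ • dC K k c + S0core K k P (Q+1) (R₂+1) 0 c)
            + (mono K P Q (R₂+1) • dA K k 0 c + S0core K k P (Q+1) (R₂+1) 0 c)
            = mono K P Q R₂ • ((d2 K k).mulVecLin (dT K k 0 c)) := by
          rw [d2_col K k h, if_neg (by omega)]
          funext j
          simp only [Pi.add_apply, Pi.sub_apply, Pi.smul_apply, smul_eq_mul]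
          unfold mono
          ring
        rw [e]
        exact ⟨mono K P Q R₂ • dT K k 0 c, by rw [map_smul]⟩

lemma sub_s0_mem (v : I1 k → Rp 2 K) :
    v - s0 K k ((d1 K k).mulVecLin v) ∈ LinearMap.range (d2 K k).mulVecLin := by
  induction v using pi_induction with
  | h0 => simp
  | hadd v w hv hw =>
      rw [map_add, map_add,
        show v + w - (s0 K k ((d1 K k).mulVecLin v) + s0 K k ((d1 K k).mulVecLin w))
          = (v - s0 K k ((d1 K k).mulVecLin v)) + (w - s0 K k ((d1 K k).mulVecLin w)) by abel]
      exact add_mem hv hw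
  | hs j u a =>
      have hmono : (monomial u) (a : K) = a • ((monomial u) (1:K)) := by
        rw [MvPolynomial.smul_monomial, smul_eq_mul, mul_one]
      rw [hmono, Pi.single_smul, LinearMap.map_smul_of_tower, map_smul, ← smul_sub]
      apply Submodule.smul_of_tower_mem
      rw [← fexp_eq u, monomial_fexp]
      set P := u 0
      set Q := u 1
      set R₂ := u 2
      rcases j with ((a' | b') | c')
      · obtain ⟨⟨a1, a2⟩, ha⟩ := a'
        rw [mulVecLin_d1_single, d1_col_A, X0_mul_mono, X1_mul_mono,
          smul_e0f_eq_single K k (by omega : (a1+1) + a2 ≤ k),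
          smul_e0f_eq_single K k (by omega : a1 + a2 ≤ k),
          map_sub, s0_single, s0_single]
        simp only
        rw [S0core_case1A, single_dA K k ha]
        rw [show mono K P Q R₂ • dA K k a1 a2
            - (mono K P Q R₂ • dA K k a1 a2 + S0core K k P (Q+1) R₂ a1 a2
               - S0core K k P (Q+1) R₂ a1 a2) = 0 by abel]
        exact zero_mem _
      · obtain ⟨⟨b1, b2⟩, hb⟩ := b'
        rw [mulVecLin_d1_single, d1_col_B, X1_mul_mono, X2_mul_mono,
          smul_e0f_eq_single K k (by omega : b1 + (b2+1) ≤ k),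
          smul_e0f_eq_single K k (by omega : (b1+1) + b2 ≤ k),
          map_sub, s0_single, s0_single]
        simp only
        rw [single_dB K k hb]
        have := key2 K k P Q R₂ b1 b2 hb
        rw [show mono K P Q R₂ • dB K k b1 b2
            - (S0core K k P (Q+1) R₂ b1 (b2+1) - S0core K k P Q (R₂+1) (b1+1) b2)
            = mono K P Q R₂ • dB K k b1 b2 - S0core K k P (Q+1) R₂ b1 (b2+1)
              + S0core K k P Q (R₂+1) (b1+1) b2 by abel]
        exact this
      · obtain ⟨c1, hc⟩ := c'
        rw [mulVecLin_d1_single, d1_col_C, X0_mul_mono, X2_mul_mono,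
          smul_e0f_eq_single K k (by omega : 0 + (c1+1) ≤ k),
          smul_e0f_eq_single K k (by omega : 0 + c1 ≤ k),
          map_sub, s0_single, s0_single]
        simp only
        rw [S0core_case1C, single_dC K k hc]
        rw [show mono K P Q R₂ • dC K k c1
            - (mono K P Q R₂ • dC K k c1 + S0core K k P Q (R₂+1) 0 c1
               - S0core K k P Q (R₂+1) 0 c1) = 0 by abel]
        exact zero_mem _

lemma exact_d2_d1 : Function.Exact (d2 K k).mulVecLin (d1 K k).mulVecLin := by
  intro v
  constructor
  · intro hv
    have := sub_s0_mem K k v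
    rw [hv, map_zero, sub_zero] at this
    exact this
  · rintro ⟨w, rfl⟩
    exact d1_d2 K k w

/-! ### injectivity of `d2` -/

lemma mulVecLin_d2_rowB {b c : ℕ} (h : b + c < k) (v : I2 k → Rp 2 K) :
    (d2 K k).mulVecLin v (Sum.inl (Sum.inr ⟨(b,c), h⟩))
      = X 0 * v ⟨(b,c), h⟩
        + (if h' : (b+1) + c < k then -(X 1 * v ⟨(b+1,c), h'⟩) else 0) := by
  simp only [Matrix.mulVecLin_apply, Matrix.mulVec, dotProduct, d2]
  simp only [add_mul, ite_mul, zero_mul, neg_mul]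
  rw [Finset.sum_add_distrib]
  congr 1
  · rw [show (∑ t : I2 k, if t.1 = (b,c) then X 0 * v t else 0)
        = if h' : b + c < k then X 0 * v ⟨(b,c), h'⟩ else 0 from sum_ite_Idx K _ _,
      dif_pos h]
  · rw [show (∑ t : I2 k, if t.1 = (b+1,c) then -(X 1 * v t) else 0)
        = if h' : (b+1) + c < k then -(X 1 * v ⟨(b+1,c), h'⟩) else 0 from sum_ite_Idx K _ _]

lemma d2_inj (v : I2 k → Rp 2 K) (hv : (d2 K k).mulVecLin v = 0) : v = 0 := by
  have key : ∀ n b c (h : b + c < k), k - b ≤ n → v ⟨(b,c), h⟩ = 0 := by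
    intro n
    induction n with
    | zero => intro b c h hn; omega
    | succ n IH =>
        intro b c h hn
        have h0 := congrFun hv (Sum.inl (Sum.inr ⟨(b,c), h⟩))
        rw [mulVecLin_d2_rowB K k h] at h0
        by_cases h' : (b+1) + c < k
        · rw [dif_pos h', IH (b+1) c h' (by omega)] at h0
          simp only [mul_zero, neg_zero, add_zero, Pi.zero_apply] at h0
          have := mul_eq_zero.mp h0
          rcases this with h1 | h1
          · exact absurd h1 (MvPolynomial.X_ne_zero 0)
          · exact h1
        · rw [dif_neg h'] at h0
          simp only [add_zero, Pi.zero_apply] at h0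
          have := mul_eq_zero.mp h0
          rcases this with h1 | h1
          · exact absurd h1 (MvPolynomial.X_ne_zero 0)
          · exact h1
  funext t
  obtain ⟨⟨b, c⟩, h⟩ := t
  exact key (k - b) b c h le_rfl


/-! ### surjectivity of `π` -/

lemma gen_mul_mem {n b c : ℕ} (hbc : b + c ≤ n) {s : Rp 2 K} (hs : s ∈ irrIdeal2 K) :
    mono K (n - b - c) b c * s
      ∈ Ideal.span {f : Rp 2 K | ∃ b' c' : ℕ, b' + c' ≤ n + 1 ∧ f = mono K (n + 1 - b' - c') b' c'} := by
  induction hs using Submodule.span_induction with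
  | mem x hx =>
      obtain ⟨i, rfl⟩ := hx
      fin_cases i
      · refine Ideal.subset_span ⟨b, c, by omega, ?_⟩
        show _ * (X 0 : Rp 2 K) = _
        rw [mul_comm, X0_mul_mono]
        congr 1
        omega
      · refine Ideal.subset_span ⟨b + 1, c, by omega, ?_⟩
        show _ * (X 1 : Rp 2 K) = _
        rw [mul_comm, X1_mul_mono]
        congr 1
        omega
      · refine Ideal.subset_span ⟨b, c + 1, by omega, ?_⟩
        show _ * (X 2 : Rp 2 K) = _
        rw [mul_comm, X2_mul_mono]
        congr 1
        omega
  | zero => simp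
  | add x y _ _ hx hy => rw [mul_add]; exact add_mem hx hy
  | smul r x _ hx =>
      rw [smul_eq_mul, ← mul_assoc, mul_comm _ r, mul_assoc]
      exact Ideal.mul_mem_left _ r hx

lemma pow_le_span (n : ℕ) :
    irrIdeal2 K ^ n ≤ Ideal.span {f : Rp 2 K | ∃ b c : ℕ, b + c ≤ n ∧ f = mono K (n - b - c) b c} := by
  induction n with
  | zero =>
      intro x _
      rw [← mul_one x]
      exact Ideal.mul_mem_left _ x (Ideal.subset_span ⟨0, 0, le_rfl, by simp [mono]⟩)
  | succ n IH =>
      rw [pow_succ, Ideal.mul_le]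
      intro r hr s hs
      have hr' := IH hr
      clear hr
      induction hr' using Submodule.span_induction with
      | mem x hx =>
          obtain ⟨b, c, hbc, rfl⟩ := hx
          exact gen_mul_mem K hbc hs
      | zero => simp
      | add x y _ _ hx hy => rw [add_mul]; exact add_mem hx hy
      | smul r' x _ hx =>
          rw [smul_eq_mul, mul_assoc]
          exact Ideal.mul_mem_left _ r' hx

lemma pi0_apply (v : I0 k → Rp 2 K) :
    pi0 K k v = ∑ m : I0 k, v m • mono K (k - m.1.1 - m.1.2) m.1.1 m.1.2 := by
  rw [pi0, LinearMap.lsum_apply, LinearMap.sum_apply]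
  rfl

lemma piM_surj : Function.Surjective (piM K k) := by
  rintro ⟨f, hf⟩
  have h1 : f ∈ Ideal.span
      (Set.range (fun m : I0 k => mono K (k - m.1.1 - m.1.2) m.1.1 m.1.2)) := by
    have h2 := pow_le_span K k hf
    have e : {f : Rp 2 K | ∃ b c : ℕ, b + c ≤ k ∧ f = mono K (k - b - c) b c}
        = Set.range (fun m : I0 k => mono K (k - m.1.1 - m.1.2) m.1.1 m.1.2) := by
      ext g
      constructor
      · rintro ⟨b, c, hbc, rfl⟩
        exact ⟨⟨(b, c), by omega⟩, rfl⟩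
      · rintro ⟨⟨⟨b, c⟩, hm⟩, rfl⟩
        exact ⟨b, c, by omega, rfl⟩
    rwa [e] at h2
  have h1' : f ∈ Submodule.span (Rp 2 K)
      (Set.range (fun m : I0 k => mono K (k - m.1.1 - m.1.2) m.1.1 m.1.2)) := h1
  rw [Submodule.mem_span_range_iff_exists_fun] at h1'
  obtain ⟨v, hv⟩ := h1'
  refine ⟨v, Subtype.ext ?_⟩
  show pi0 K k v = f
  rw [pi0_apply]
  exact hv


/-! ### homogeneity of entries -/

lemma d1_hom (m : I0 k) (j : I1 k) : (d1 K k m j).IsHomogeneous 1 := by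
  rcases j with ((a | b) | c) <;>
    · simp only [d1]
      apply MvPolynomial.IsHomogeneous.add <;>
        · split_ifs
          all_goals first
            | exact MvPolynomial.isHomogeneous_X _ _
            | exact (MvPolynomial.isHomogeneous_X _ _).neg
            | exact MvPolynomial.isHomogeneous_zero _ _ _

lemma d2_hom (i : I1 k) (t : I2 k) : (d2 K k i t).IsHomogeneous 1 := by
  rcases i with ((a | b) | c) <;>
    simp only [d2] <;>
    first
    | (apply MvPolynomial.IsHomogeneous.add <;>
        · split_ifs
          all_goals first
            | exact MvPolynomial.isHomogeneous_X _ _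
            | exact (MvPolynomial.isHomogeneous_X _ _).neg
            | exact MvPolynomial.isHomogeneous_zero _ _ _)
    | (split_ifs
       all_goals first
         | exact MvPolynomial.isHomogeneous_X _ _
         | exact (MvPolynomial.isHomogeneous_X _ _).neg
         | exact MvPolynomial.isHomogeneous_zero _ _ _)

/-! ### transport along equivalences to `Fin` index types -/

def e0 : I0 k ≃ Fin ((k + 2).choose 2) := Fintype.equivFinOfCardEq (card_I0 k)
def e1 : I1 k ≃ Fin (k ^ 2 + 2 * k) := Fintype.equivFinOfCardEq (card_I1 k)
def e2 : I2 k ≃ Fin ((k + 1).choose 2) := Fintype.equivFinOfCardEq (card_I2 k)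

def A0 : Matrix (Fin ((k + 2).choose 2)) (Fin (k ^ 2 + 2 * k)) (Rp 2 K) :=
  (d1 K k).submatrix (e0 k).symm (e1 k).symm
def A1 : Matrix (Fin (k ^ 2 + 2 * k)) (Fin ((k + 1).choose 2)) (Rp 2 K) :=
  (d2 K k).submatrix (e1 k).symm (e2 k).symm

def piF : (Fin ((k + 2).choose 2) → Rp 2 K) →ₗ[Rp 2 K] ↥(irrIdeal2 K ^ k) :=
  (piM K k).comp (LinearMap.funLeft (Rp 2 K) (Rp 2 K) (e0 k))

lemma A0_mulVecLin (v : Fin (k ^ 2 + 2 * k) → Rp 2 K) :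
    (A0 K k).mulVecLin v = ((d1 K k).mulVecLin (v ∘ (e1 k))) ∘ (e0 k).symm := by
  show (A0 K k).mulVec v = _
  rw [A0, Matrix.submatrix_mulVec_equiv]
  rfl

lemma A1_mulVecLin (v : Fin ((k + 1).choose 2) → Rp 2 K) :
    (A1 K k).mulVecLin v = ((d2 K k).mulVecLin (v ∘ (e2 k))) ∘ (e1 k).symm := by
  show (A1 K k).mulVec v = _
  rw [A1, Matrix.submatrix_mulVec_equiv]
  rfl

lemma piF_apply (v : Fin ((k + 2).choose 2) → Rp 2 K) :
    piF K k v = piM K k (v ∘ (e0 k)) := rfl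

lemma piF_surj : Function.Surjective (piF K k) := by
  intro y
  obtain ⟨v, hv⟩ := piM_surj K k y
  exact ⟨v ∘ (e0 k).symm, by rw [piF_apply]; convert hv; funext m; simp⟩

lemma exact0 : Function.Exact (A0 K k).mulVecLin (piF K k) := by
  intro y
  rw [piF_apply]
  constructor
  · intro hy
    obtain ⟨w, hw⟩ := (exact_d1_piM K k (y ∘ (e0 k))).mp hy
    refine ⟨w ∘ (e1 k).symm, ?_⟩
    rw [A0_mulVecLin]
    have h1 : (w ∘ (e1 k).symm) ∘ (e1 k) = w := by funext j; simp
    rw [h1, hw]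
    funext i
    simp
  · rintro ⟨w, rfl⟩
    rw [A0_mulVecLin]
    have h1 : (((d1 K k).mulVecLin (w ∘ (e1 k))) ∘ (e0 k).symm) ∘ (e0 k)
        = (d1 K k).mulVecLin (w ∘ (e1 k)) := by funext m; simp
    rw [h1]
    exact (exact_d1_piM K k _).mpr ⟨w ∘ (e1 k), rfl⟩

lemma exact1 : Function.Exact (A1 K k).mulVecLin (A0 K k).mulVecLin := by
  intro y
  rw [A0_mulVecLin]
  constructor
  · intro hy
    have hy' : (d1 K k).mulVecLin (y ∘ (e1 k)) = 0 := by
      funext j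
      have := congrFun hy ((e0 k) j)
      simpa using this
    obtain ⟨w, hw⟩ := (exact_d2_d1 K k (y ∘ (e1 k))).mp hy'
    refine ⟨w ∘ (e2 k).symm, ?_⟩
    rw [A1_mulVecLin]
    have h1 : (w ∘ (e2 k).symm) ∘ (e2 k) = w := by funext j; simp
    rw [h1, hw]
    funext i
    simp
  · rintro ⟨w, rfl⟩
    rw [A1_mulVecLin]
    have h1 : (((d2 K k).mulVecLin (w ∘ (e2 k))) ∘ (e1 k).symm) ∘ (e1 k)
        = (d2 K k).mulVecLin (w ∘ (e2 k)) := by funext m; simp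
    rw [h1]
    have h2 := (exact_d2_d1 K k ((d2 K k).mulVecLin (w ∘ (e2 k)))).mpr ⟨w ∘ (e2 k), rfl⟩
    rw [h2]
    funext m
    simp

lemma A1_inj (y : Fin ((k + 1).choose 2) → Rp 2 K)
    (hy : (A1 K k).mulVecLin y = 0) : y = 0 := by
  rw [A1_mulVecLin] at hy
  have hy' : (d2 K k).mulVecLin (y ∘ (e2 k)) = 0 := by
    funext j
    have := congrFun hy ((e1 k) j)
    simpa using this
  have h2 := d2_inj K k _ hy'
  funext t
  have := congrFun h2 ((e2 k).symm t)
  simpa using this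

end
end Stmt7


/-- Over `R = k[x₀,x₁,x₂]`, the truncation `R_{≥k} = 𝔪^k` has minimal free
resolution `0 → R(-k-2)^{(k²+k)/2} → R(-k-1)^{k²+2k} → R(-k)^{(k²+3k+2)/2} → R_{≥k} → 0`,
i.e. `β₀ = C(k+2,2) = (k²+3k+2)/2`, `β₁ = k²+2k`, `β₂ = C(k+1,2) = (k²+k)/2`. -/
theorem stmt7 (K : Type*) [Field K] (k : ℕ) :
    HasLinResol 2 K ↥(irrIdeal2 K ^ k)
      (fun i => if i = 0 then (k + 2).choose 2
        else if i = 1 then k ^ 2 + 2 * k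
        else if i = 2 then (k + 1).choose 2 else 0) := by
  refine ⟨fun i => match i with
    | 0 => Stmt7.A0 K k
    | 1 => Stmt7.A1 K k
    | (n+2) => 0, Stmt7.piF K k, ?_, Stmt7.piF_surj K k, Stmt7.exact0 K k, ?_⟩
  · intro i r c
    match i with
    | 0 => exact Stmt7.d1_hom K k _ _
    | 1 => exact Stmt7.d2_hom K k _ _
    | (n+2) => exact c.elim0
  · intro i
    match i with
    | 0 => exact Stmt7.exact1 K k
    | 1 =>
        intro y
        constructor
        · intro hy
          refine ⟨0, ?_⟩
          rw [map_zero]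
          exact (Stmt7.A1_inj K k y hy).symm
        · rintro ⟨w, rfl⟩
          show (Stmt7.A1 K k).mulVecLin
              ((0 : Matrix (Fin ((k+1).choose 2)) (Fin 0) (Rp 2 K)).mulVecLin w) = 0
          rw [Matrix.mulVecLin_zero, LinearMap.zero_apply, map_zero]
    | (n+2) =>
        haveI : Subsingleton
            (Fin (if n + 2 + 1 = 0 then (k + 2).choose 2
              else if n + 2 + 1 = 1 then k ^ 2 + 2 * k
              else if n + 2 + 1 = 2 then (k + 1).choose 2 else 0) → Rp 2 K) :=
          inferInstanceAs (Subsingleton (Fin 0 → Rp 2 K))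
        intro y
        have hy : y = 0 := Subsingleton.elim _ _
        subst hy
        constructor
        · intro _
          exact ⟨0, Subsingleton.elim _ _⟩
        · intro _
          rw [map_zero]
end

section
/- The 5×5 matrix of linear forms in k[x₀,x₁,x₂] given by A = [[−x₁,−x₂,0,0,0],[x₀,−x₁,−x₂,0,0],[0,x₀,0,−x₂,0],[0,0,x₀,x₁,−x₂],[0,0,0,x₀,x₁]] has rank exactly 4 at every point (x₀:x₁:x₂) of the projective plane; equivalently, every nonzero k-linear combination A(c₀,c₁,c₂) = c₀A₀+c₁A₁+c₂A₂ of its coefficient matrices has rank 4. -/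
lemma rank_lt_of_mulVec' {K : Type*} [Field K] {n : ℕ} (A : Matrix (Fin n) (Fin n) K)
    (v : Fin n → K) (hv : v ≠ 0) (hAv : A.mulVec v = 0) : A.rank < n := by
  have hker : LinearMap.ker A.mulVecLin ≠ ⊥ := by
    intro hb
    exact hv (by simpa [hb] using (LinearMap.mem_ker (f := A.mulVecLin)).mpr hAv)
  have h1 : 0 < Module.finrank K (LinearMap.ker A.mulVecLin) := by
    rw [Module.finrank_pos_iff]
    exact Submodule.nontrivial_iff_ne_bot.mpr hker
  have h2 := LinearMap.finrank_range_add_finrank_ker A.mulVecLin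
  rw [Matrix.rank]
  have h3 : Module.finrank K (Fin n → K) = n := by simp
  omega

lemma rank_ge_of_minor' {K : Type*} [Field K] {m n : ℕ} (B : Matrix (Fin m) (Fin m) K)
    (f g : Fin n → Fin m) (h : (B.submatrix f g).det ≠ 0) : n ≤ B.rank := by
  have key : B.submatrix f g =
      (1 : Matrix (Fin m) (Fin m) K).submatrix f _root_.id * B *
        (1 : Matrix (Fin m) (Fin m) K).submatrix _root_.id g := by
    ext i j
    simp [Matrix.mul_apply, Matrix.one_apply, Finset.sum_ite_eq, Finset.sum_ite_eq']
  have h4 : (B.submatrix f g).rank = n := by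
    rw [Matrix.rank_of_isUnit _ ((Matrix.isUnit_iff_isUnit_det _).mpr h.isUnit)]
    simp
  calc n = (B.submatrix f g).rank := h4.symm
    _ ≤ _ := by
        rw [key]
        exact le_trans (Matrix.rank_mul_le_left _ _) (Matrix.rank_mul_le_right _ _)


/-- Coefficient of `x₀` in the matrix `A`. -/
def A0 (K : Type*) [Field K] : Matrix (Fin 5) (Fin 5) K :=
  !![0,0,0,0,0; 1,0,0,0,0; 0,1,0,0,0; 0,0,1,0,0; 0,0,0,1,0]

/-- Coefficient of `x₁` in the matrix `A`. -/
def A1 (K : Type*) [Field K] : Matrix (Fin 5) (Fin 5) K :=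
  !![-1,0,0,0,0; 0,-1,0,0,0; 0,0,0,0,0; 0,0,0,1,0; 0,0,0,0,1]

/-- Coefficient of `x₂` in the matrix `A`. -/
def A2 (K : Type*) [Field K] : Matrix (Fin 5) (Fin 5) K :=
  !![0,-1,0,0,0; 0,0,-1,0,0; 0,0,0,-1,0; 0,0,0,0,-1; 0,0,0,0,0]

set_option maxHeartbeats 1000000 in
/-- The 5×5 matrix of linear forms
`A = [[−x₁,−x₂,0,0,0],[x₀,−x₁,−x₂,0,0],[0,x₀,0,−x₂,0],[0,0,x₀,x₁,−x₂],[0,0,0,x₀,x₁]]`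
has constant rank 4: every nonzero linear combination `c₀A₀+c₁A₁+c₂A₂` of its
coefficient matrices has rank exactly 4. -/
theorem stmt11 (K : Type*) [Field K] [IsAlgClosed K] (h2 : (2 : K) ≠ 0)
    (c : Fin 3 → K) (hc : c ≠ 0) :
    (c 0 • A0 K + c 1 • A1 K + c 2 • A2 K).rank = 4 := by
  set B := c 0 • A0 K + c 1 • A1 K + c 2 • A2 K with hBdef
  have hB : B = !![-(c 1), -(c 2), 0, 0, 0;
                   c 0, -(c 1), -(c 2), 0, 0;
                   0, c 0, 0, -(c 2), 0;
                   0, 0, c 0, c 1, -(c 2);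
                   0, 0, 0, c 0, c 1] := by
    ext i j
    fin_cases i <;> fin_cases j <;> simp [hBdef, A0, A1, A2]
  apply le_antisymm
  · set w : Fin 5 → K := ![c 2 ^ 2, -(c 1 * c 2), c 1 ^ 2 + c 0 * c 2, -(c 0 * c 1), c 0 ^ 2]
      with hw
    have hwne : w ≠ 0 := by
      intro h
      apply hc
      have e0 := congr_fun h 0
      have e2 := congr_fun h 2
      have e4 := congr_fun h 4
      simp [hw] at e0 e2 e4
      rw [e4, e0] at e2
      have hc1 : c 1 = 0 := by
        have : c 1 ^ 2 = 0 := by linear_combination e2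
        simpa [sq] using sq_eq_zero_iff.mp this
      ext i; fin_cases i <;> first | exact e4 | exact e0 | exact hc1
    have hmul : B.mulVec w = 0 := by
      rw [hB]
      ext i
      fin_cases i <;>
        (simp [hw, Matrix.mulVec, dotProduct, Fin.sum_univ_five]; ring)
    have := rank_lt_of_mulVec' B w hwne hmul
    omega
  · by_cases h0 : c 0 = 0
    · by_cases hc2 : c 2 = 0
      · have h1 : c 1 ≠ 0 := by
          intro h1
          apply hc; ext i; fin_cases i <;> assumption
        apply rank_ge_of_minor' B ![0,1,3,4] ![0,1,3,4]
        have : (B.submatrix ![0,1,3,4] ![0,1,3,4]).det = c 1 ^ 4 := by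
          rw [hB, Matrix.det_succ_row_zero]
          simp [Fin.sum_univ_succ, Matrix.det_fin_three, Matrix.submatrix, Fin.succAbove, h0, hc2]
          ring
        rw [this]
        exact pow_ne_zero _ h1
      · apply rank_ge_of_minor' B ![0,1,2,3] ![1,2,3,4]
        have : (B.submatrix ![0,1,2,3] ![1,2,3,4]).det = c 2 ^ 4 := by
          rw [hB, Matrix.det_succ_row_zero]
          simp [Fin.sum_univ_succ, Matrix.det_fin_three, Matrix.submatrix, Fin.succAbove]
          ring
        rw [this]
        exact pow_ne_zero _ hc2
    · apply rank_ge_of_minor' B ![1,2,3,4] ![0,1,2,3]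
      have : (B.submatrix ![1,2,3,4] ![0,1,2,3]).det = c 0 ^ 4 := by
        rw [hB, Matrix.det_succ_row_zero]
        simp [Fin.sum_univ_succ, Matrix.det_fin_three, Matrix.submatrix, Fin.succAbove]
        ring
      rw [this]
      exact pow_ne_zero _ h0
end

section
/- Let R = k[x₀,...,x_n] and let E, G be finitely generated graded R-modules that are m-linearly presented (up to order 1 and 2 respectively), and let μ: E → G be a surjective graded morphism of degree 0. Then the kernel F = ker(μ) is generated in degrees m and m+1. -/
open MvPolynomial Finset

namespace Stmt12Aux

variable {σ R : Type*} [CommSemiring R]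

lemma eq_C_of_isHomogeneous_zero {p : MvPolynomial σ R}
    (h : p.IsHomogeneous 0) : p = MvPolynomial.C (MvPolynomial.coeff 0 p) := by
  have h1 : homogeneousComponent 0 p = p := by
    rw [homogeneousComponent_of_mem ((mem_homogeneousSubmodule 0 p).2 h)]
    simp
  calc p = homogeneousComponent 0 p := h1.symm
    _ = C (coeff 0 p) := homogeneousComponent_zero p

lemma homogeneousComponent_mul_isHomogeneous
    {a : MvPolynomial σ R} {k : ℕ} (ha : a.IsHomogeneous k) (g : MvPolynomial σ R) (d : ℕ) :
    homogeneousComponent (k + d) (a * g) = a * homogeneousComponent d g := by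
  conv_lhs => rw [← sum_homogeneousComponent g]
  rw [Finset.mul_sum, map_sum]
  have key : ∀ i, homogeneousComponent (k + d) (a * homogeneousComponent i g)
      = if i = d then a * homogeneousComponent i g else 0 := by
    intro i
    rw [homogeneousComponent_of_mem ((mem_homogeneousSubmodule _ _).2
      (ha.mul (homogeneousComponent_isHomogeneous i g)))]
    congr 1
    simp [Nat.add_left_cancel_iff, eq_comm]
  rw [Finset.sum_congr rfl fun i _ => key i, Finset.sum_ite_eq']
  by_cases hd : d ∈ Finset.range (g.totalDegree + 1)
  · rw [if_pos hd]
  · rw [if_neg hd, homogeneousComponent_eq_zero, mul_zero]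
    rw [Finset.mem_range] at hd; omega

lemma homogeneousComponent_zero_mul_isHomogeneous_one
    {a : MvPolynomial σ R} (ha : a.IsHomogeneous 1) (g : MvPolynomial σ R) :
    homogeneousComponent 0 (a * g) = 0 := by
  conv_lhs => rw [← sum_homogeneousComponent g]
  rw [Finset.mul_sum, map_sum]
  refine Finset.sum_eq_zero fun i _ => ?_
  rw [homogeneousComponent_of_mem ((mem_homogeneousSubmodule _ _).2
    (ha.mul (homogeneousComponent_isHomogeneous i g)))]
  rw [if_neg (by omega)]

lemma finsupp_degree_single [DecidableEq σ] (k : σ) :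
    (Finsupp.single k (1:ℕ)).degree = 1 := by
  simp [Finsupp.degree_apply, Finsupp.support_single_ne_zero]

lemma finsupp_degree_add (a b : σ →₀ ℕ) : (a + b).degree = a.degree + b.degree := by
  simp [Finsupp.degree_eq_weight_one, map_add]

lemma exists_X_mul_decomp [Fintype σ] [LinearOrder σ] [Nonempty σ]
    {p : MvPolynomial σ R} {e : ℕ} (hp : p.IsHomogeneous (e + 1)) :
    ∃ t : σ → MvPolynomial σ R, (∀ k, (t k).IsHomogeneous e) ∧ p = ∑ k, X k * t k := by
  classical
  have hdm : ∀ m ∈ p.support, Finsupp.degree m = e + 1 := by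
    intro m hm
    by_contra hne
    exact (MvPolynomial.mem_support_iff.1 hm) (hp.coeff_eq_zero hne)
  have hne : ∀ m ∈ p.support, m.support.Nonempty := by
    intro m hm
    rw [Finsupp.support_nonempty_iff]
    intro h0
    rw [h0] at hm
    have := hdm 0 hm
    rw [map_zero] at this
    omega
  set κ : (σ →₀ ℕ) → σ := fun m =>
    if h : m.support.Nonempty then m.support.min' h else Classical.arbitrary σ with hκdef
  have hκmem : ∀ m ∈ p.support, κ m ∈ m.support := by
    intro m hm
    rw [hκdef]
    simp only [dif_pos (hne m hm)]
    exact Finset.min'_mem _ _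
  have hsub : ∀ m ∈ p.support, Finsupp.single (κ m) 1 + (m - Finsupp.single (κ m) 1) = m := by
    intro m hm
    apply add_tsub_cancel_of_le
    rw [Finsupp.single_le_iff]
    exact Nat.one_le_iff_ne_zero.2 (Finsupp.mem_support_iff.1 (hκmem m hm))
  refine ⟨fun k => ∑ m ∈ p.support.filter (fun m => κ m = k),
      monomial (m - Finsupp.single k 1) (coeff m p), fun k => ?_, ?_⟩
  · apply MvPolynomial.IsHomogeneous.sum
    intro m hm
    rw [Finset.mem_filter] at hm
    apply isHomogeneous_monomial
    have h1 := hsub m hm.1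
    rw [hm.2] at h1
    have h2 : (Finsupp.single k 1 + (m - Finsupp.single k 1)).degree = e + 1 := by
      rw [h1]; exact hdm m hm.1
    rw [finsupp_degree_add, finsupp_degree_single] at h2
    omega
  · conv_lhs => rw [p.as_sum, ← Finset.sum_fiberwise p.support κ (fun m => monomial m (coeff m p))]
    refine Finset.sum_congr rfl fun k _ => ?_
    rw [Finset.mul_sum]
    refine Finset.sum_congr rfl fun m hm => ?_
    rw [Finset.mem_filter] at hm
    have h1 := hsub m hm.1
    rw [hm.2] at h1
    generalize coeff m p = c
    conv_lhs => rw [← h1]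
    rw [monomial_single_add, pow_one]



variable {σ K : Type*} [CommSemiring K]

lemma sum_smul_single {R : Type*} [CommSemiring R] {a : ℕ} (v : Fin a → R) :
    ∑ j, v j • (Pi.single j (1 : R) : Fin a → R) = v := by
  funext i
  rw [Finset.sum_apply]
  simp [Pi.single_apply]

lemma mapC_mulVec {a b : ℕ} (A : Matrix (Fin a) (Fin b) K) (v : Fin b → K) :
    (A.map (MvPolynomial.C (σ := σ))).mulVec (fun i => MvPolynomial.C (v i))
      = fun i => MvPolynomial.C (A.mulVec v i) := by
  funext i
  simp [Matrix.mulVec, dotProduct, Matrix.map_apply, map_sum]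

lemma isHomog_mulVec_mapC {a b : ℕ} (A : Matrix (Fin a) (Fin b) K)
    {v : Fin b → MvPolynomial σ K} {d : ℕ} (hv : ∀ j, (v j).IsHomogeneous d) (i : Fin a) :
    (((A.map MvPolynomial.C).mulVec v) i).IsHomogeneous d := by
  have h : (A.map MvPolynomial.C).mulVec v i = ∑ j, MvPolynomial.C (A i j) * v j := by
    simp [Matrix.mulVec, dotProduct, Matrix.map_apply]
  rw [h]
  exact MvPolynomial.IsHomogeneous.sum _ _ _ fun j _ => (hv j).C_mul _

lemma isHomog_mulVec_lin {a b : ℕ} (A : Matrix (Fin a) (Fin b) (MvPolynomial σ K))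
    (hA : ∀ i j, (A i j).IsHomogeneous 1) {v : Fin b → MvPolynomial σ K} {d : ℕ}
    (hv : ∀ j, (v j).IsHomogeneous d) (i : Fin a) :
    ((A.mulVec v) i).IsHomogeneous (1 + d) := by
  have h : A.mulVec v i = ∑ j, A i j * v j := by
    simp [Matrix.mulVec, dotProduct]
  rw [h]
  exact MvPolynomial.IsHomogeneous.sum _ _ _ fun j _ => (hA i j).mul (hv j)

lemma homComp_mulVec_mapC {a b : ℕ} (A : Matrix (Fin a) (Fin b) K)
    (v : Fin b → MvPolynomial σ K) (d : ℕ) (i : Fin a) :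
    homogeneousComponent d (((A.map MvPolynomial.C).mulVec v) i)
      = ((A.map MvPolynomial.C).mulVec (fun j => homogeneousComponent d (v j))) i := by
  simp [Matrix.mulVec, dotProduct, Matrix.map_apply, map_sum,
    homogeneousComponent_C_mul]

lemma homComp_mulVec_lin {a b : ℕ} (A : Matrix (Fin a) (Fin b) (MvPolynomial σ K))
    (hA : ∀ i j, (A i j).IsHomogeneous 1) (v : Fin b → MvPolynomial σ K) (e : ℕ) (i : Fin a) :
    homogeneousComponent (1 + e) ((A.mulVec v) i)
      = (A.mulVec (fun j => homogeneousComponent e (v j))) i := by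
  simp only [Matrix.mulVec, dotProduct, map_sum]
  exact Finset.sum_congr rfl fun j _ => homogeneousComponent_mul_isHomogeneous (hA i j) _ _

lemma homComp0_mulVec_lin {a b : ℕ} (A : Matrix (Fin a) (Fin b) (MvPolynomial σ K))
    (hA : ∀ i j, (A i j).IsHomogeneous 1) (v : Fin b → MvPolynomial σ K) (i : Fin a) :
    homogeneousComponent 0 ((A.mulVec v) i) = 0 := by
  simp only [Matrix.mulVec, dotProduct, map_sum]
  exact Finset.sum_eq_zero fun j _ => homogeneousComponent_zero_mul_isHomogeneous_one (hA i j) _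



end Stmt12Aux



/-- Let `E` and `G` be `m`-linearly presented graded `R`-modules (`G` up to order 2):
`E` has a minimal presentation `R(-m-1)^{bE} --AE--> R(-m)^{aE} --πE--> E → 0` with `AE` a
matrix of linear forms, and similarly `G` with one further linear step `BG2`.  (Since all
generators sit in the single degree `m`, the grading of `E` is encoded by its presentation:
its degree-`m` part is `πE(constant vectors)` and its degree-`(m+1)` part is
`πE(vectors of linear forms)`.)  Let `μ : E → G` be a surjective graded morphism of degree 0.
Then `F = ker μ` is generated in degrees `m` and `m+1`. -/
theorem stmt12 (n aE bE aG bG cG : ℕ) (K : Type*) [Field K]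
    (E G : Type*) [AddCommGroup E] [Module (Rp n K) E] [AddCommGroup G] [Module (Rp n K) G]
    (πE : (Fin aE → Rp n K) →ₗ[Rp n K] E) (hπE : Function.Surjective πE)
    (AE : Matrix (Fin aE) (Fin bE) (Rp n K)) (hAE : ∀ i j, (AE i j).IsHomogeneous 1)
    (hexE : Function.Exact AE.mulVecLin πE)
    (πG : (Fin aG → Rp n K) →ₗ[Rp n K] G) (hπG : Function.Surjective πG)
    (BG1 : Matrix (Fin aG) (Fin bG) (Rp n K)) (hBG1 : ∀ i j, (BG1 i j).IsHomogeneous 1)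
    (hexG1 : Function.Exact BG1.mulVecLin πG)
    (BG2 : Matrix (Fin bG) (Fin cG) (Rp n K)) (hBG2 : ∀ i j, (BG2 i j).IsHomogeneous 1)
    (hexG2 : Function.Exact BG2.mulVecLin BG1.mulVecLin)
    (μ : E →ₗ[Rp n K] G) (hμ : Function.Surjective μ)
    -- `μ` is graded of degree 0: it maps each graded piece of `E` into that of `G`
    (hgraded : ∀ (d : ℕ) (v : Fin aE → Rp n K),
      (∀ i, v i ∈ MvPolynomial.homogeneousSubmodule (Fin (n + 1)) K d) →
      ∃ w : Fin aG → Rp n K,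
        (∀ i, w i ∈ MvPolynomial.homogeneousSubmodule (Fin (n + 1)) K d) ∧
        μ (πE v) = πG w) :
    -- `ker μ` is generated by its elements of degree `m` and `m+1`
    Submodule.span (Rp n K) ((LinearMap.ker μ : Set E) ∩
        ({y | ∃ v : Fin aE → K, y = πE fun i => MvPolynomial.C (v i)} ∪
         {y | ∃ v : Fin aE → Rp n K,
            (∀ i, v i ∈ MvPolynomial.homogeneousSubmodule (Fin (n + 1)) K 1) ∧ y = πE v}))
      = LinearMap.ker μ := by
  classical
  set S : Set E := (LinearMap.ker μ : Set E) ∩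
        ({y | ∃ v : Fin aE → K, y = πE fun i => MvPolynomial.C (v i)} ∪
         {y | ∃ v : Fin aE → Rp n K,
            (∀ i, v i ∈ MvPolynomial.homogeneousSubmodule (Fin (n + 1)) K 1) ∧ y = πE v})
    with hSdef
  -- Step 1 : the comparison matrix MM with μ ∘ πE = πG ∘ (MM.map C).mulVec
  have hsingle0 : ∀ j : Fin aE, ∀ i, (Pi.single j (1 : Rp n K) : Fin aE → Rp n K) i
      ∈ MvPolynomial.homogeneousSubmodule (Fin (n+1)) K 0 := by
    intro j i
    rw [MvPolynomial.mem_homogeneousSubmodule, Pi.single_apply]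
    split
    · exact MvPolynomial.isHomogeneous_one _ _
    · exact MvPolynomial.isHomogeneous_zero _ _ _
  choose w hw hμw using fun j => hgraded 0 (Pi.single j 1) (hsingle0 j)
  set MM : Matrix (Fin aG) (Fin aE) K :=
    Matrix.of (fun i j => MvPolynomial.coeff 0 (w j i)) with hMMdef
  have hwC : ∀ j i, w j i = MvPolynomial.C (MM i j) := fun j i =>
    Stmt12Aux.eq_C_of_isHomogeneous_zero
      ((MvPolynomial.mem_homogeneousSubmodule _ _).1 (hw j i))
  set LC : Matrix (Fin aG) (Fin aE) (Rp n K) := MM.map MvPolynomial.C with hLCdef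
  have hLC1 : ∀ j, LC.mulVec (Pi.single j 1) = w j := by
    intro j
    rw [Matrix.mulVec_single]
    funext i
    rw [hwC j i]
    simp [hLCdef]
  have hL : ∀ v : Fin aE → Rp n K, μ (πE v) = πG (LC.mulVec v) := by
    intro v
    have h1 : πE v = ∑ j, v j • πE (Pi.single j 1) := by
      conv_lhs => rw [← Stmt12Aux.sum_smul_single v]
      rw [map_sum]
      simp_rw [map_smul]
    have h2 : LC.mulVec v = ∑ j, v j • w j := by
      conv_lhs => rw [← Matrix.mulVecLin_apply, ← Stmt12Aux.sum_smul_single v, map_sum]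
      simp_rw [map_smul, Matrix.mulVecLin_apply, hLC1]
    rw [h1, h2, map_sum, map_sum]
    simp_rw [map_smul, hμw]
  -- Step 2 : MM is surjective over K
  have hMsurj : Function.Surjective (Matrix.mulVecLin MM) := by
    intro c
    obtain ⟨x, hx⟩ := hμ (πG fun i => MvPolynomial.C (c i))
    obtain ⟨p, rfl⟩ := hπE x
    rw [hL p] at hx
    have hker0 : πG (LC.mulVec p - fun i => MvPolynomial.C (c i)) = 0 := by
      rw [map_sub, hx, sub_self]
    obtain ⟨q, hq⟩ := (hexG1 _).1 hker0
    rw [Matrix.mulVecLin_apply] at hq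
    refine ⟨fun j => MvPolynomial.coeff 0 (p j), ?_⟩
    rw [Matrix.mulVecLin_apply]
    have key : ∀ i, (MvPolynomial.C (MM.mulVec (fun j => MvPolynomial.coeff 0 (p j)) i) : Rp n K)
        = MvPolynomial.C (c i) := by
      intro i
      have h0 := congrArg (fun y => MvPolynomial.homogeneousComponent 0 (y i)) hq
      simp only [Pi.sub_apply] at h0
      rw [Stmt12Aux.homComp0_mulVec_lin BG1 hBG1 q i, map_sub,
        Stmt12Aux.homComp_mulVec_mapC MM p 0 i] at h0
      have hC : MvPolynomial.homogeneousComponent 0 (MvPolynomial.C (c i) : Rp n K)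
          = MvPolynomial.C (c i) := by
        rw [MvPolynomial.homogeneousComponent_zero, MvPolynomial.coeff_zero_C]
      rw [hC] at h0
      have h00 : (fun j => MvPolynomial.homogeneousComponent 0 (p j))
          = fun j => MvPolynomial.C (MvPolynomial.coeff 0 (p j)) := by
        funext j
        rw [MvPolynomial.homogeneousComponent_zero]
      rw [h00, Stmt12Aux.mapC_mulVec MM] at h0
      exact (sub_eq_zero.1 h0.symm)
    funext i
    exact MvPolynomial.C_injective _ _ (key i)
  obtain ⟨ginv, hginv⟩ := LinearMap.exists_rightInverse_of_surjective (Matrix.mulVecLin MM)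
      (LinearMap.range_eq_top.2 hMsurj)
  set NN : Matrix (Fin aE) (Fin aG) K := LinearMap.toMatrix' ginv with hNNdef
  have hMN : MM * NN = 1 := by
    have h1 : LinearMap.toMatrix' (Matrix.mulVecLin MM ∘ₗ ginv) = MM * NN := by
      rw [LinearMap.toMatrix'_comp, ← Matrix.toLin'_apply', LinearMap.toMatrix'_toLin']
    rw [hginv, LinearMap.toMatrix'_id] at h1
    exact h1.symm
  set NC : Matrix (Fin aE) (Fin aG) (Rp n K) := NN.map MvPolynomial.C with hNCdef
  have hLCNC : ∀ y : Fin aG → Rp n K, LC.mulVec (NC.mulVec y) = y := by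
    intro y
    rw [Matrix.mulVec_mulVec]
    have : LC * NC = 1 := by
      rw [hLCdef, hNCdef, ← Matrix.map_mul (f := (MvPolynomial.C : K →+* Rp n K)), hMN,
        Matrix.map_one _ (map_zero _) (map_one _)]
    rw [this, Matrix.one_mulVec]
  -- Step 3 : constant vectors in the kernel of MM give elements of S
  have hcolS : ∀ cv : Fin aE → K, MM.mulVec cv = 0 →
      πE (fun i => MvPolynomial.C (cv i)) ∈ S := by
    intro cv hcv
    refine ⟨?_, Or.inl ⟨cv, rfl⟩⟩
    rw [SetLike.mem_coe, LinearMap.mem_ker, hL, Stmt12Aux.mapC_mulVec MM, hcv]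
    have h0 : (fun i : Fin aG => (MvPolynomial.C ((0 : Fin aG → K) i) : Rp n K)) = 0 := by
      funext i; simp
    rw [h0, map_zero]
  have hBker : ∀ y : Fin bG → Rp n K, πG (BG1.mulVec y) = 0 := fun y =>
    (hexG1 _).2 ⟨y, by rw [Matrix.mulVecLin_apply]⟩
  -- Step 4 : the main induction on degree
  have main : ∀ d : ℕ, ∀ v : Fin aE → Rp n K, (∀ i, (v i).IsHomogeneous d) →
      μ (πE v) = 0 → πE v ∈ Submodule.span (Rp n K) S := by
    intro d
    induction d using Nat.strong_induction_on with
    | _ d IH =>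
      intro v hv hker
      match d, hv, hker, IH with
      | 0, hv, hker, _ =>
        refine Submodule.subset_span ⟨?_, Or.inl ⟨fun i => MvPolynomial.coeff 0 (v i), ?_⟩⟩
        · rw [SetLike.mem_coe, LinearMap.mem_ker]; exact hker
        · exact congrArg πE (funext fun i => Stmt12Aux.eq_C_of_isHomogeneous_zero (hv i))
      | 1, hv, hker, _ =>
        refine Submodule.subset_span ⟨?_, Or.inr ⟨v, fun i =>
          (MvPolynomial.mem_homogeneousSubmodule _ _).2 (hv i), rfl⟩⟩
        rw [SetLike.mem_coe, LinearMap.mem_ker]; exact hker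
      | (e+2), hv, hker, IH =>
        have h1 : πG (LC.mulVec v) = 0 := by rw [← hL]; exact hker
        obtain ⟨u0, hu0⟩ := (hexG1 _).1 h1
        rw [Matrix.mulVecLin_apply] at hu0
        set u : Fin bG → Rp n K :=
          fun j => MvPolynomial.homogeneousComponent (e+1) (u0 j) with hudef
        have hu : BG1.mulVec u = LC.mulVec v := by
          funext i
          have hvhom : ((LC.mulVec v) i).IsHomogeneous (e+2) :=
            Stmt12Aux.isHomog_mulVec_mapC MM hv i
          calc BG1.mulVec u i
              = MvPolynomial.homogeneousComponent (1 + (e+1)) (BG1.mulVec u0 i) :=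
                (Stmt12Aux.homComp_mulVec_lin BG1 hBG1 u0 (e+1) i).symm
            _ = MvPolynomial.homogeneousComponent (e+2) (LC.mulVec v i) := by
                rw [show 1 + (e+1) = e+2 from by omega, hu0]
            _ = LC.mulVec v i := by
                rw [MvPolynomial.homogeneousComponent_of_mem
                  ((MvPolynomial.mem_homogeneousSubmodule _ _).2 hvhom), if_pos rfl]
        have huhom : ∀ j, (u j).IsHomogeneous (e+1) := fun j =>
          MvPolynomial.homogeneousComponent_isHomogeneous _ _
        choose t ht hts using fun j => Stmt12Aux.exists_X_mul_decomp (huhom j)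
        set vv : Fin (n+1) → Fin aE → Rp n K :=
          fun k => NC.mulVec (BG1.mulVec (fun j => t j k)) with hvvdef
        have hvvker : ∀ k, μ (πE (vv k)) = 0 := by
          intro k
          rw [hL, hvvdef, hLCNC]
          exact hBker _
        have hvvhom : ∀ k i, ((vv k) i).IsHomogeneous (e+1) := by
          intro k i
          refine Stmt12Aux.isHomog_mulVec_mapC NN (v := BG1.mulVec fun j => t j k) ?_ i
          intro j'
          have h := Stmt12Aux.isHomog_mulVec_lin BG1 hBG1 (fun j => ht j k) j'
          rwa [show 1 + e = e + 1 from by omega] at h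
        have hvvspan : ∀ k, πE (vv k) ∈ Submodule.span (Rp n K) S :=
          fun k => IH (e+1) (by omega) (vv k) (hvvhom k) (hvvker k)
        set z : Fin aE → Rp n K := v - ∑ k, (MvPolynomial.X k : Rp n K) • vv k with hzdef
        have hsumu : (∑ k, (MvPolynomial.X k : Rp n K) • (fun j => t j k) : Fin bG → Rp n K) = u := by
          funext j
          rw [Finset.sum_apply]
          simp only [Pi.smul_apply, smul_eq_mul]
          exact (hts j).symm
        have hLz : LC.mulVec z = 0 := by
          have hstep : LC.mulVec z = LC.mulVec v - ∑ k, (MvPolynomial.X k : Rp n K) • LC.mulVec (vv k) := by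
            rw [hzdef, ← Matrix.mulVecLin_apply, map_sub, map_sum]
            simp_rw [map_smul, Matrix.mulVecLin_apply]
          rw [hstep]
          have h2 : ∀ k, LC.mulVec (vv k) = BG1.mulVec (fun j => t j k) := fun k => hLCNC _
          simp_rw [h2]
          have h3 : ∑ k, (MvPolynomial.X k : Rp n K) • BG1.mulVec (fun j => t j k) = BG1.mulVec u := by
            rw [← hsumu]
            simp_rw [← Matrix.mulVecLin_apply, ← map_smul, ← map_sum]
          rw [h3, hu, sub_self]
        set cvec : Fin aE → Fin aE → K :=
          fun j => Pi.single j 1 - NN.mulVec (MM.mulVec (Pi.single j 1)) with hcvecdef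
        have hcvec0 : ∀ j, MM.mulVec (cvec j) = 0 := by
          intro j
          have hexp : MM.mulVec (cvec j)
              = MM.mulVec (Pi.single j 1) - MM.mulVec (NN.mulVec (MM.mulVec (Pi.single j 1))) := by
            rw [hcvecdef, ← Matrix.mulVecLin_apply, map_sub]
            simp [Matrix.mulVecLin_apply]
          rw [hexp, Matrix.mulVec_mulVec, hMN, Matrix.one_mulVec, sub_self]
        have hcol : ∀ j : Fin aE, (fun i => MvPolynomial.C (cvec j i))
            = (Pi.single j (1 : Rp n K) : Fin aE → Rp n K)
              - NC.mulVec (LC.mulVec (Pi.single j 1)) := by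
          intro j
          have hsingleC : (Pi.single j (1 : Rp n K) : Fin aE → Rp n K)
              = fun i => MvPolynomial.C ((Pi.single j (1:K) : Fin aE → K) i) := by
            funext i
            rw [Pi.single_apply, Pi.single_apply]
            split <;> simp
          rw [hsingleC, Stmt12Aux.mapC_mulVec MM, Stmt12Aux.mapC_mulVec NN]
          funext i
          rw [hcvecdef]
          simp [map_sub]
        have hzdecomp : z = ∑ j, z j • (fun i => MvPolynomial.C (cvec j i)) := by
          have hsplit : ∑ j, z j • ((Pi.single j (1 : Rp n K) : Fin aE → Rp n K)
                - NC.mulVec (LC.mulVec (Pi.single j 1)))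
              = (∑ j, z j • (Pi.single j (1 : Rp n K) : Fin aE → Rp n K))
                - ∑ j, z j • NC.mulVec (LC.mulVec (Pi.single j 1)) := by
            rw [← Finset.sum_sub_distrib]
            exact Finset.sum_congr rfl fun j _ => smul_sub _ _ _
          have hsecond : ∑ j, z j • NC.mulVec (LC.mulVec (Pi.single j 1))
              = NC.mulVec (LC.mulVec z) := by
            conv_rhs => rw [← Stmt12Aux.sum_smul_single z]
            simp_rw [← Matrix.mulVecLin_apply, map_sum, map_smul]
          simp_rw [hcol]
          rw [hsplit, hsecond, hLz, Stmt12Aux.sum_smul_single z]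
          simp
        have hcolmem : ∀ j, πE (fun i => MvPolynomial.C (cvec j i)) ∈ S :=
          fun j => hcolS (cvec j) (hcvec0 j)
        have hvz : πE v = πE z + ∑ k, (MvPolynomial.X k : Rp n K) • πE (vv k) := by
          have : v = z + ∑ k, (MvPolynomial.X k : Rp n K) • vv k := by
            rw [hzdef, sub_add_cancel]
          rw [this, map_add, map_sum]
          simp_rw [map_smul]
        rw [hvz]
        apply Submodule.add_mem
        · rw [hzdecomp, map_sum]
          simp_rw [map_smul]
          exact Submodule.sum_mem _ fun j _ =>
            Submodule.smul_mem _ _ (Submodule.subset_span (hcolmem j))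
        · exact Submodule.sum_mem _ fun k _ => Submodule.smul_mem _ _ (hvvspan k)
  -- Step 5 : conclusion
  apply le_antisymm
  · rw [Submodule.span_le]
    intro y hy
    exact hy.1
  · intro x hx
    obtain ⟨p, rfl⟩ := hπE x
    rw [LinearMap.mem_ker] at hx
    have h1 : πG (LC.mulVec p) = 0 := by rw [← hL]; exact hx
    obtain ⟨u0, hu0⟩ := (hexG1 _).1 h1
    rw [Matrix.mulVecLin_apply] at hu0
    set D := Finset.univ.sup (fun i => (p i).totalDegree) with hD
    have hsumD : ∀ i, ∑ d ∈ Finset.range (D+1), MvPolynomial.homogeneousComponent d (p i) = p i := by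
      intro i
      conv_rhs => rw [← MvPolynomial.sum_homogeneousComponent (p i)]
      symm
      apply Finset.sum_subset
      · apply Finset.range_subset_range.2
        have : (p i).totalDegree ≤ D := Finset.le_sup (f := fun i => (p i).totalDegree) (Finset.mem_univ i)
        omega
      · intro x _ hx2
        rw [Finset.mem_range] at hx2
        exact MvPolynomial.homogeneousComponent_eq_zero _ _ (by omega)
    have hdecomp : πE p = ∑ d ∈ Finset.range (D+1),
        πE (fun i => MvPolynomial.homogeneousComponent d (p i)) := by
      rw [← map_sum]
      congr 1
      funext i
      rw [Finset.sum_apply, hsumD i]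
    rw [hdecomp]
    apply Submodule.sum_mem
    intro d _
    apply main d _ (fun i => MvPolynomial.homogeneousComponent_isHomogeneous _ _)
    rw [hL]
    have hcomp : LC.mulVec (fun i => MvPolynomial.homogeneousComponent d (p i))
        = fun i => MvPolynomial.homogeneousComponent d (BG1.mulVec u0 i) := by
      funext i
      rw [← Stmt12Aux.homComp_mulVec_mapC MM p d i, hu0]
    rw [hcomp]
    match d with
    | 0 =>
      have : (fun i => MvPolynomial.homogeneousComponent 0 (BG1.mulVec u0 i))
          = (0 : Fin aG → Rp n K) := by
        funext i
        exact Stmt12Aux.homComp0_mulVec_lin BG1 hBG1 u0 i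
      rw [this, map_zero]
    | (e+1) =>
      have : (fun i => MvPolynomial.homogeneousComponent (e+1) (BG1.mulVec u0 i))
          = BG1.mulVec (fun j => MvPolynomial.homogeneousComponent e (u0 j)) := by
        funext i
        rw [show e+1 = 1+e from by omega]
        exact Stmt12Aux.homComp_mulVec_lin BG1 hBG1 u0 e i
      rw [this]
      exact hBker _
end

section
/- With notation as above (E m-linearly presented, G m-linearly presented up to order 2, μ: E → G surjective), if the induced map μ¹: E¹ → G¹ on the first free modules of the minimal resolutions is surjective, then F = ker(μ) is generated in degree m, has only linear and quadratic syzygies, and β_{0,m}(F) = β_{0,m}(E) − β_{0,m}(G). -/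
open Matrix MvPolynomial

/-- Columns of a matrix product: `M *ᵥ v = ∑ j, v j • (column j of M)`. -/
private lemma mulVec_eq_sum_cols {α : Type*} [CommRing α] {a b : ℕ}
    (M : Matrix (Fin a) (Fin b) α) (v : Fin b → α) :
    M *ᵥ v = ∑ j, v j • (fun i => M i j) := by
  funext i
  simp [Matrix.mulVec, dotProduct, Finset.sum_apply, mul_comm]

/-- Folding two mapped scalar matrices acting on a vector of polynomials. -/
private lemma mulVec_map_map {K : Type*} [Field K] {σ : Type*} {x y z : ℕ}
    (A : Matrix (Fin x) (Fin y) K) (B : Matrix (Fin y) (Fin z) K)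
    (v : Fin z → MvPolynomial σ K) :
    A.map (C : K →+* MvPolynomial σ K) *ᵥ (B.map (C : K →+* MvPolynomial σ K) *ᵥ v)
      = (A * B).map (C : K →+* MvPolynomial σ K) *ᵥ v := by
  rw [Matrix.mulVec_mulVec, Matrix.map_mul]

/-- Constant coefficient of a mapped scalar matrix acting on polynomials. -/
private lemma cc_map_mulVec {K : Type*} [Field K] {σ : Type*} {x y : ℕ}
    (M : Matrix (Fin x) (Fin y) K) (v : Fin y → MvPolynomial σ K) (i : Fin x) :
    constantCoeff ((M.map (C : K →+* MvPolynomial σ K) *ᵥ v) i)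
      = (M *ᵥ fun j => constantCoeff (v j)) i := by
  simp [Matrix.mulVec, dotProduct, map_sum]

/-- Constant coefficient of a matrix with degree-1 homogeneous entries acting on a vector. -/
private lemma cc_hom_mulVec {K : Type*} [Field K] {σ : Type*} {x y : ℕ}
    (A : Matrix (Fin x) (Fin y) (MvPolynomial σ K))
    (hA : ∀ i j, (A i j).IsHomogeneous 1) (w : Fin y → MvPolynomial σ K) (i : Fin x) :
    constantCoeff ((A *ᵥ w) i) = 0 := by
  have h0 : ∀ i j, constantCoeff (A i j) = 0 := by
    intro i j
    have := (hA i j).coeff_eq_zero (d := 0) (by simp)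
    simpa [MvPolynomial.constantCoeff_eq, MvPolynomial.coeff] using this
  simp [Matrix.mulVec, dotProduct, map_sum, h0]

/-- A surjective scalar matrix between finite free modules has a "kernel matrix" `N`,
a retraction `P` of it, and a right inverse `Q`, with a splitting identity. -/
private lemma kernel_matrices {K : Type*} [Field K] {a' a : ℕ}
    (M : Matrix (Fin a') (Fin a) K) (hs : Function.Surjective M.mulVec) :
    a' ≤ a ∧ ∃ (N : Matrix (Fin a) (Fin (a - a')) K) (P : Matrix (Fin (a - a')) (Fin a) K)
      (Q : Matrix (Fin a) (Fin a') K),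
      M * N = 0 ∧ P * N = 1 ∧ M * Q = 1 ∧ N * P + Q * M = 1 + N * (P * (Q * M)) := by
  classical
  set f : (Fin a → K) →ₗ[K] (Fin a' → K) := Matrix.toLin' M with hf
  have hfs : Function.Surjective f := by
    intro y; obtain ⟨x, hx⟩ := hs y
    exact ⟨x, by simpa [hf, Matrix.toLin'_apply] using hx⟩
  have hrange : LinearMap.range f = ⊤ := LinearMap.range_eq_top.2 hfs
  have hrk : a' + Module.finrank K (LinearMap.ker f) = a := by
    have h := LinearMap.finrank_range_add_finrank_ker f
    rwa [hrange, finrank_top, Module.finrank_fin_fun, Module.finrank_fin_fun] at h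
  have hle : a' ≤ a := Nat.le.intro hrk
  have hdim : Module.finrank K (LinearMap.ker f) = a - a' := by omega
  let b : Module.Basis (Fin (a - a')) K (LinearMap.ker f) := Module.finBasisOfFinrankEq _ _ hdim
  obtain ⟨W, hW⟩ := Submodule.exists_isCompl (LinearMap.ker f)
  let ι : (Fin (a - a') → K) →ₗ[K] (Fin a → K) :=
    (LinearMap.ker f).subtype ∘ₗ (b.equivFun.symm : (Fin (a - a') → K) ≃ₗ[K] _).toLinearMap
  let ρ : (Fin a → K) →ₗ[K] (Fin (a - a') → K) :=
    (b.equivFun : _ ≃ₗ[K] (Fin (a - a') → K)).toLinearMap ∘ₗ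
      (LinearMap.ker f).projectionOnto W hW
  obtain ⟨g, hg⟩ := f.exists_rightInverse_of_surjective hrange
  have hcomp0 : f ∘ₗ ι = 0 := by
    apply LinearMap.ext; intro x
    exact (b.equivFun.symm x).2
  have hρι : ρ ∘ₗ ι = LinearMap.id := by
    apply LinearMap.ext; intro x
    simp only [ι, ρ, LinearMap.comp_apply, LinearEquiv.coe_coe, Submodule.coe_subtype,
      LinearMap.id_apply]
    rw [Submodule.projectionOnto_apply_left hW (b.equivFun.symm x),
      LinearEquiv.apply_symm_apply]
  have hιρ : ∀ x ∈ LinearMap.ker f, ι (ρ x) = x := by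
    intro x hx
    have hproj : (LinearMap.ker f).projectionOnto W hW x = ⟨x, hx⟩ := by
      simpa using Submodule.projectionOnto_apply_left hW ⟨x, hx⟩
    simp only [ι, ρ, LinearMap.comp_apply, LinearEquiv.coe_coe, Submodule.coe_subtype,
      hproj, LinearEquiv.symm_apply_apply]
  have hkey : ι ∘ₗ ρ + g ∘ₗ f = LinearMap.id + ι ∘ₗ (ρ ∘ₗ (g ∘ₗ f)) := by
    apply LinearMap.ext; intro x
    have hz : x - g (f x) ∈ LinearMap.ker f := by
      rw [LinearMap.mem_ker, map_sub]
      rw [show f (g (f x)) = f x from LinearMap.congr_fun hg (f x)]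
      simp
    have h2 := hιρ _ hz
    rw [map_sub, map_sub] at h2
    simp only [LinearMap.add_apply, LinearMap.comp_apply, LinearMap.id_apply]
    rw [sub_eq_sub_iff_add_eq_add] at h2
    linear_combination (norm := module) h2
  have hMf : LinearMap.toMatrix' f = M := by rw [hf, LinearMap.toMatrix'_toLin']
  refine ⟨hle, LinearMap.toMatrix' ι, LinearMap.toMatrix' ρ, LinearMap.toMatrix' g,
    ?_, ?_, ?_, ?_⟩
  · have := congrArg LinearMap.toMatrix' hcomp0
    simpa [LinearMap.toMatrix'_comp, hMf] using this
  · have := congrArg LinearMap.toMatrix' hρι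
    simpa [LinearMap.toMatrix'_comp, LinearMap.toMatrix'_id] using this
  · have := congrArg LinearMap.toMatrix' hg
    simpa [LinearMap.toMatrix'_comp, LinearMap.toMatrix'_id, hMf] using this
  · have := congrArg LinearMap.toMatrix' hkey
    simpa [LinearMap.toMatrix'_comp, LinearMap.toMatrix'_id, hMf, map_add,
      Matrix.mul_assoc] using this

/-- A linear map between finite free modules hitting every basis vector is surjective,
so the source has at least as many coordinates. -/
private lemma card_le_of_hits_basis {K : Type*} [Field K] {r c : ℕ}
    (T : Matrix (Fin r) (Fin c) K) (h : ∀ i, ∃ x, T *ᵥ x = Pi.single i 1) : r ≤ c := by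
  classical
  have hsurj : Function.Surjective T.mulVecLin := by
    intro y
    choose x hx using h
    refine ⟨∑ i, y i • x i, ?_⟩
    rw [map_sum]
    conv_rhs => rw [pi_eq_sum_univ y]
    refine Finset.sum_congr rfl fun i _ => ?_
    rw [_root_.map_smul, Matrix.mulVecLin_apply, hx]
    funext j
    simp [Pi.single_apply, eq_comm]
  have hrange : LinearMap.range T.mulVecLin = ⊤ := LinearMap.range_eq_top.2 hsurj
  have h := LinearMap.finrank_range_add_finrank_ker T.mulVecLin
  rw [hrange, finrank_top, Module.finrank_fin_fun, Module.finrank_fin_fun] at h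
  omega

set_option maxHeartbeats 2000000 in
/-- Theorem A (ii).  `E` is `m`-linearly presented, `G` is `m`-linearly presented up to
order 2, `μ : E → G` is a surjective graded morphism, and the induced chain map
`μ¹ : E¹ → G¹` (given, by linearity, by a scalar matrix `M1` making the squares commute)
is surjective.  Then `F = ker μ` is generated in degree `m` (by `aE - aG = β₀(E) - β₀(G)`
elements, and no fewer: `β_{0,m}(F) = β_{0,m}(E) - β_{0,m}(G)`), with only linear and
quadratic syzygies. -/
theorem stmt13 (n aE bE aG bG cG : ℕ) (K : Type*) [Field K]
    (E G : Type*) [AddCommGroup E] [Module (Rp n K) E] [AddCommGroup G] [Module (Rp n K) G]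
    (πE : (Fin aE → Rp n K) →ₗ[Rp n K] E) (hπE : Function.Surjective πE)
    (AE : Matrix (Fin aE) (Fin bE) (Rp n K)) (hAE : ∀ i j, (AE i j).IsHomogeneous 1)
    (hexE : Function.Exact AE.mulVecLin πE)
    (πG : (Fin aG → Rp n K) →ₗ[Rp n K] G) (hπG : Function.Surjective πG)
    (BG1 : Matrix (Fin aG) (Fin bG) (Rp n K)) (hBG1 : ∀ i j, (BG1 i j).IsHomogeneous 1)
    (hexG1 : Function.Exact BG1.mulVecLin πG)
    (BG2 : Matrix (Fin bG) (Fin cG) (Rp n K)) (hBG2 : ∀ i j, (BG2 i j).IsHomogeneous 1)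
    (hexG2 : Function.Exact BG2.mulVecLin BG1.mulVecLin)
    (μ : E →ₗ[Rp n K] G) (hμ : Function.Surjective μ)
    -- the induced chain maps `μ⁰`, `μ¹` (scalar matrices, by linearity of the presentations)
    (M0 : Matrix (Fin aG) (Fin aE) K) (M1 : Matrix (Fin bG) (Fin bE) K)
    (hcomm0 : πG ∘ₗ (M0.map (MvPolynomial.C)).mulVecLin = μ ∘ₗ πE)
    (hcomm1 : (M0.map (MvPolynomial.C)) * AE = BG1 * (M1.map (MvPolynomial.C)))
    -- `μ¹` is surjective
    (hμ1 : Function.Surjective (M1.map (MvPolynomial.C : K →+* Rp n K)).mulVecLin) :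
    aG ≤ aE ∧
    (∃ p : (Fin (aE - aG) → Rp n K) →ₗ[Rp n K] ↥(LinearMap.ker μ),
      Function.Surjective p ∧
      -- the generators lie in the degree-`m` part of `E`
      (∀ i, ∃ v : Fin aE → K, ((p (Pi.single i 1) : E) = πE fun j => MvPolynomial.C (v j))) ∧
      -- the syzygies among them are linear and quadratic
      LinearMap.ker p = Submodule.span (Rp n K) ((LinearMap.ker p : Set (Fin (aE - aG) → Rp n K)) ∩
        ({v | ∀ j, v j ∈ MvPolynomial.homogeneousSubmodule (Fin (n + 1)) K 1} ∪
         {v | ∀ j, v j ∈ MvPolynomial.homogeneousSubmodule (Fin (n + 1)) K 2}))) ∧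
    -- minimality: `ker μ` cannot be generated by fewer than `aE - aG` elements
    (∀ (c : ℕ) (q : (Fin c → Rp n K) →ₗ[Rp n K] ↥(LinearMap.ker μ)),
      Function.Surjective q → aE - aG ≤ c) := by
  classical
  -- abbreviation for the coefficient ring hom
  set Cr : K →+* Rp n K := (MvPolynomial.C : K →+* Rp n K) with hCr
  -- `M0` is surjective over `K`
  have hM0K : Function.Surjective M0.mulVec := by
    intro y
    obtain ⟨e, he⟩ := hμ (πG fun i => Cr (y i))
    obtain ⟨u, hu⟩ := hπE e
    have h1 : πG ((M0.map ⇑Cr).mulVecLin u) = πG fun i => Cr (y i) := by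
      rw [show πG ((M0.map ⇑Cr).mulVecLin u) = μ (πE u) from LinearMap.congr_fun hcomm0 u,
        hu, he]
    have h2 : πG ((M0.map ⇑Cr).mulVecLin u - fun i => Cr (y i)) = 0 := by
      rw [map_sub, h1, sub_self]
    obtain ⟨w, hw⟩ := (hexG1 _).mp h2
    refine ⟨fun j => constantCoeff (u j), ?_⟩
    funext i
    have h3 := congrFun hw i
    have h4 := congrArg constantCoeff h3
    rw [Matrix.mulVecLin_apply] at h4
    rw [cc_hom_mulVec BG1 hBG1 w i] at h4
    simp only [Pi.sub_apply, map_sub, Matrix.mulVecLin_apply] at h4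
    rw [cc_map_mulVec M0 u i] at h4
    have h5 : constantCoeff (Cr (y i)) = y i := by simp [hCr]
    rw [h5] at h4
    exact (sub_eq_zero.mp h4.symm)
  have hM1K : Function.Surjective M1.mulVec := by
    intro y
    obtain ⟨v, hv⟩ := hμ1 (fun i => Cr (y i))
    refine ⟨fun j => constantCoeff (v j), ?_⟩
    funext i
    have h3 := congrArg constantCoeff (congrFun hv i)
    simp only [Matrix.mulVecLin_apply] at h3
    rw [cc_map_mulVec M1 v i] at h3
    simpa [hCr] using h3
  obtain ⟨haG, N, P, Q0, hM0N, hPN, hM0Q, hNPkey⟩ := kernel_matrices M0 hM0K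
  obtain ⟨hbG, L, L', Q, hM1L, hL'L, hM1Q, hLLkey⟩ := kernel_matrices M1 hM1K
  -- transfer of the kernel-splitting identities to `R`
  have hPN_R : ∀ v : Fin (aE - aG) → Rp n K, P.map ⇑Cr *ᵥ (N.map ⇑Cr *ᵥ v) = v := by
    intro v
    rw [mulVec_map_map, hPN, Matrix.map_one ⇑Cr (map_zero Cr) (map_one Cr), Matrix.one_mulVec]
  have hNinj : ∀ v1 v2 : Fin (aE - aG) → Rp n K,
      N.map ⇑Cr *ᵥ v1 = N.map ⇑Cr *ᵥ v2 → v1 = v2 := by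
    intro v1 v2 h
    rw [← hPN_R v1, ← hPN_R v2, h]
  have hker_R : ∀ v : Fin aE → Rp n K, M0.map ⇑Cr *ᵥ v = 0 →
      N.map ⇑Cr *ᵥ (P.map ⇑Cr *ᵥ v) = v := by
    intro v hv
    have e1 : (N * P + Q0 * M0).map ⇑Cr *ᵥ v = N.map ⇑Cr *ᵥ (P.map ⇑Cr *ᵥ v) := by
      rw [Matrix.map_add ⇑Cr (fun a b => map_add Cr a b), Matrix.add_mulVec,
        ← mulVec_map_map N P, ← mulVec_map_map Q0 M0, hv, Matrix.mulVec_zero, add_zero]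
    have e2 : (1 + N * (P * (Q0 * M0))).map ⇑Cr *ᵥ v = v := by
      rw [Matrix.map_add ⇑Cr (fun a b => map_add Cr a b), Matrix.add_mulVec,
        Matrix.map_one ⇑Cr (map_zero Cr) (map_one Cr), Matrix.one_mulVec,
        ← mulVec_map_map N (P * (Q0 * M0)), ← mulVec_map_map P (Q0 * M0),
        ← mulVec_map_map Q0 M0, hv, Matrix.mulVec_zero, Matrix.mulVec_zero,
        Matrix.mulVec_zero, add_zero]
    rw [← e1, hNPkey, e2]
  have hsplit_R : ∀ (w : Fin bE → Rp n K) (t : Fin cG → Rp n K),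
      M1.map ⇑Cr *ᵥ w = BG2 *ᵥ t →
      w = L.map ⇑Cr *ᵥ (L'.map ⇑Cr *ᵥ w - L'.map ⇑Cr *ᵥ (Q.map ⇑Cr *ᵥ (BG2 *ᵥ t)))
          + Q.map ⇑Cr *ᵥ (BG2 *ᵥ t) := by
    intro w t ht
    have e1 : (L * L' + Q * M1).map ⇑Cr *ᵥ w
        = L.map ⇑Cr *ᵥ (L'.map ⇑Cr *ᵥ w) + Q.map ⇑Cr *ᵥ (BG2 *ᵥ t) := by
      rw [Matrix.map_add ⇑Cr (fun a b => map_add Cr a b), Matrix.add_mulVec,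
        ← mulVec_map_map L L', ← mulVec_map_map Q M1, ht]
    have e2 : (1 + L * (L' * (Q * M1))).map ⇑Cr *ᵥ w
        = w + L.map ⇑Cr *ᵥ (L'.map ⇑Cr *ᵥ (Q.map ⇑Cr *ᵥ (BG2 *ᵥ t))) := by
      rw [Matrix.map_add ⇑Cr (fun a b => map_add Cr a b), Matrix.add_mulVec,
        Matrix.map_one ⇑Cr (map_zero Cr) (map_one Cr), Matrix.one_mulVec,
        ← mulVec_map_map L (L' * (Q * M1)), ← mulVec_map_map L' (Q * M1),
        ← mulVec_map_map Q M1, ht]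
    have e3 : L.map ⇑Cr *ᵥ (L'.map ⇑Cr *ᵥ w) + Q.map ⇑Cr *ᵥ (BG2 *ᵥ t)
        = w + L.map ⇑Cr *ᵥ (L'.map ⇑Cr *ᵥ (Q.map ⇑Cr *ᵥ (BG2 *ᵥ t))) := by
      rw [← e1, hLLkey, e2]
    rw [Matrix.mulVec_sub]
    linear_combination -e3
  have hMN_R : ∀ v, M0.map ⇑Cr *ᵥ (N.map ⇑Cr *ᵥ v) = 0 := by
    intro v
    rw [mulVec_map_map, hM0N, Matrix.map_zero ⇑Cr (map_zero Cr), Matrix.zero_mulVec]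
  -- the map `p`
  have hmem : ∀ v, πE (N.map ⇑Cr *ᵥ v) ∈ LinearMap.ker μ := by
    intro v
    rw [LinearMap.mem_ker]
    have h := LinearMap.congr_fun hcomm0 (N.map ⇑Cr *ᵥ v)
    simp only [LinearMap.comp_apply, Matrix.mulVecLin_apply] at h
    rw [← h, hMN_R, map_zero]
  set p : (Fin (aE - aG) → Rp n K) →ₗ[Rp n K] ↥(LinearMap.ker μ) :=
    (πE ∘ₗ (N.map ⇑Cr).mulVecLin).codRestrict (LinearMap.ker μ)
      (fun v => by simpa [Matrix.mulVecLin_apply] using hmem v) with hp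
  have hp_apply : ∀ v, (p v : E) = πE (N.map ⇑Cr *ᵥ v) := by
    intro v
    simp [hp, LinearMap.codRestrict, Matrix.mulVecLin_apply]
  -- surjectivity of `p`
  have hpsurj : Function.Surjective p := by
    rintro ⟨e, he⟩
    obtain ⟨u, hu⟩ := hπE e
    have h0 : πG (M0.map ⇑Cr *ᵥ u) = 0 := by
      have h := LinearMap.congr_fun hcomm0 u
      simp only [LinearMap.comp_apply, Matrix.mulVecLin_apply] at h
      rw [h, hu]
      exact LinearMap.mem_ker.mp he
    obtain ⟨w, hw⟩ := (hexG1 _).mp h0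
    rw [Matrix.mulVecLin_apply] at hw
    obtain ⟨v', hv'⟩ := hμ1 w
    rw [Matrix.mulVecLin_apply] at hv'
    have hAEv : M0.map ⇑Cr *ᵥ (AE *ᵥ v') = M0.map ⇑Cr *ᵥ u := by
      rw [Matrix.mulVec_mulVec, (show M0.map ⇑Cr * AE = BG1 * M1.map ⇑Cr from hcomm1), ← Matrix.mulVec_mulVec, hv', hw]
    have hz0 : M0.map ⇑Cr *ᵥ (u - AE *ᵥ v') = 0 := by
      rw [Matrix.mulVec_sub, hAEv, sub_self]
    have hπz : πE (u - AE *ᵥ v') = e := by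
      rw [map_sub, hu]
      have h5 := hexE.apply_apply_eq_zero v'
      rw [Matrix.mulVecLin_apply] at h5
      rw [h5, sub_zero]
    refine ⟨P.map ⇑Cr *ᵥ (u - AE *ᵥ v'), Subtype.ext ?_⟩
    rw [hp_apply, hker_R _ hz0, hπz]
  -- the generators are images of constant vectors
  have hgen : ∀ i, ∃ v : Fin aE → K,
      ((p (Pi.single i 1) : E) = πE fun j => MvPolynomial.C (v j)) := by
    intro i
    refine ⟨fun j => N j i, ?_⟩
    rw [hp_apply]
    congr 1
    funext j
    simp [Matrix.mulVec_single, Matrix.map_apply, hCr]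
  -- membership criterion for `ker p`
  have hkerp : ∀ v, v ∈ LinearMap.ker p ↔ πE (N.map ⇑Cr *ᵥ v) = 0 := by
    intro v
    rw [LinearMap.mem_ker, ← hp_apply v]
    exact ⟨fun h => by rw [h]; rfl, fun h => Subtype.ext h⟩
  -- constant coefficients of kernel elements vanish
  have hcc : ∀ v ∈ LinearMap.ker p, ∀ j, constantCoeff (v j) = 0 := by
    intro v hv j
    obtain ⟨w, hw⟩ := (hexE _).mp ((hkerp v).mp hv)
    rw [Matrix.mulVecLin_apply] at hw
    have h1 : N *ᵥ (fun j => constantCoeff (v j)) = 0 := by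
      funext i
      have h2 := congrArg constantCoeff (congrFun hw i)
      rw [cc_hom_mulVec AE hAE w i, cc_map_mulVec N v i] at h2
      simpa using h2.symm
    have h2 := congrArg (fun x => (P *ᵥ x) j) h1
    simpa [Matrix.mulVec_mulVec, hPN, Matrix.one_mulVec, Matrix.mulVec_zero] using h2
  -- the syzygy matrices
  set Cm : Matrix (Fin (aE - aG)) (Fin (bE - bG)) (Rp n K) :=
    P.map ⇑Cr * (AE * L.map ⇑Cr) with hCm
  set Dm : Matrix (Fin (aE - aG)) (Fin cG) (Rp n K) :=
    P.map ⇑Cr * (AE * (Q.map ⇑Cr * BG2)) with hDm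
  have hBB : ∀ t, BG1 *ᵥ (BG2 *ᵥ t) = 0 := by
    intro t
    have h := hexG2.apply_apply_eq_zero t
    rwa [Matrix.mulVecLin_apply, Matrix.mulVecLin_apply] at h
  have hNC : ∀ x, N.map ⇑Cr *ᵥ (Cm *ᵥ x) = AE *ᵥ (L.map ⇑Cr *ᵥ x) := by
    intro x
    have h1 : M0.map ⇑Cr *ᵥ (AE *ᵥ (L.map ⇑Cr *ᵥ x)) = 0 := by
      rw [Matrix.mulVec_mulVec, (show M0.map ⇑Cr * AE = BG1 * M1.map ⇑Cr from hcomm1), ← Matrix.mulVec_mulVec, mulVec_map_map, hM1L,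
        Matrix.map_zero ⇑Cr (map_zero Cr), Matrix.zero_mulVec, Matrix.mulVec_zero]
    have h2 := hker_R _ h1
    calc N.map ⇑Cr *ᵥ (Cm *ᵥ x)
        = N.map ⇑Cr *ᵥ (P.map ⇑Cr *ᵥ (AE *ᵥ (L.map ⇑Cr *ᵥ x))) := by
          rw [hCm, ← Matrix.mulVec_mulVec, ← Matrix.mulVec_mulVec]
      _ = AE *ᵥ (L.map ⇑Cr *ᵥ x) := h2
  have hND : ∀ x, N.map ⇑Cr *ᵥ (Dm *ᵥ x) = AE *ᵥ (Q.map ⇑Cr *ᵥ (BG2 *ᵥ x)) := by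
    intro x
    have h1 : M0.map ⇑Cr *ᵥ (AE *ᵥ (Q.map ⇑Cr *ᵥ (BG2 *ᵥ x))) = 0 := by
      rw [Matrix.mulVec_mulVec, (show M0.map ⇑Cr * AE = BG1 * M1.map ⇑Cr from hcomm1), ← Matrix.mulVec_mulVec, mulVec_map_map, hM1Q,
        Matrix.map_one ⇑Cr (map_zero Cr) (map_one Cr), Matrix.one_mulVec, hBB]
    have h2 := hker_R _ h1
    calc N.map ⇑Cr *ᵥ (Dm *ᵥ x)
        = N.map ⇑Cr *ᵥ (P.map ⇑Cr *ᵥ (AE *ᵥ (Q.map ⇑Cr *ᵥ (BG2 *ᵥ x)))) := by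
          rw [hDm, ← Matrix.mulVec_mulVec, ← Matrix.mulVec_mulVec, ← Matrix.mulVec_mulVec]
      _ = AE *ᵥ (Q.map ⇑Cr *ᵥ (BG2 *ᵥ x)) := h2
  -- homogeneity of the syzygy matrices
  have hmulC : ∀ (pq : MvPolynomial (Fin (n + 1)) K) (d : ℕ), pq.IsHomogeneous d →
      ∀ a : K, (pq * Cr a).IsHomogeneous d := by
    intro pq d hpq a
    simpa [hCr] using hpq.mul (isHomogeneous_C _ a)
  have hCmul : ∀ (pq : MvPolynomial (Fin (n + 1)) K) (d : ℕ), pq.IsHomogeneous d →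
      ∀ a : K, (Cr a * pq).IsHomogeneous d := by
    intro pq d hpq a
    simpa [hCr] using (isHomogeneous_C (Fin (n + 1)) a).mul hpq
  have hALhom : ∀ k j, ((AE * L.map ⇑Cr) k j).IsHomogeneous 1 := by
    intro k j
    rw [Matrix.mul_apply, ← MvPolynomial.mem_homogeneousSubmodule]
    exact Submodule.sum_mem _ fun l _ => (MvPolynomial.mem_homogeneousSubmodule _ _).mpr
      (by simpa [Matrix.map_apply] using hmulC _ 1 (hAE k l) (L l j))
  have hChom : ∀ i j, (Cm i j).IsHomogeneous 1 := by
    intro i j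
    rw [hCm, Matrix.mul_apply, ← MvPolynomial.mem_homogeneousSubmodule]
    exact Submodule.sum_mem _ fun k _ => (MvPolynomial.mem_homogeneousSubmodule _ _).mpr
      (by simpa [Matrix.map_apply] using hCmul _ 1 (hALhom k j) (P i k))
  have hQBhom : ∀ l j, ((Q.map ⇑Cr * BG2) l j).IsHomogeneous 1 := by
    intro l j
    rw [Matrix.mul_apply, ← MvPolynomial.mem_homogeneousSubmodule]
    exact Submodule.sum_mem _ fun k _ => (MvPolynomial.mem_homogeneousSubmodule _ _).mpr
      (by simpa [Matrix.map_apply] using hCmul _ 1 (hBG2 k j) (Q l k))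
  have hAQBhom : ∀ k j, ((AE * (Q.map ⇑Cr * BG2)) k j).IsHomogeneous 2 := by
    intro k j
    rw [Matrix.mul_apply, ← MvPolynomial.mem_homogeneousSubmodule]
    exact Submodule.sum_mem _ fun l _ => (MvPolynomial.mem_homogeneousSubmodule _ _).mpr
      (by simpa using (hAE k l).mul (hQBhom l j))
  have hDhom : ∀ i j, (Dm i j).IsHomogeneous 2 := by
    intro i j
    rw [hDm, Matrix.mul_apply, ← MvPolynomial.mem_homogeneousSubmodule]
    exact Submodule.sum_mem _ fun k _ => (MvPolynomial.mem_homogeneousSubmodule _ _).mpr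
      (by simpa [Matrix.map_apply] using hCmul _ 2 (hAQBhom k j) (P i k))
  -- every kernel element is a combination of the columns of `Cm` and `Dm`
  have hsyz : ∀ v ∈ LinearMap.ker p, ∃ s t, v = Cm *ᵥ s + Dm *ᵥ t := by
    intro v hv
    obtain ⟨w, hw⟩ := (hexE _).mp ((hkerp v).mp hv)
    rw [Matrix.mulVecLin_apply] at hw
    have h2 : BG1 *ᵥ (M1.map ⇑Cr *ᵥ w) = 0 := by
      have h3 : M0.map ⇑Cr *ᵥ (AE *ᵥ w) = 0 := by
        rw [hw]; exact hMN_R v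
      rw [Matrix.mulVec_mulVec, ← (show M0.map ⇑Cr * AE = BG1 * M1.map ⇑Cr from hcomm1), ← Matrix.mulVec_mulVec]
      exact h3
    obtain ⟨t, ht⟩ := (hexG2 _).mp (by rw [Matrix.mulVecLin_apply]; exact h2)
    rw [Matrix.mulVecLin_apply] at ht
    have hdec := hsplit_R w t ht.symm
    refine ⟨L'.map ⇑Cr *ᵥ w - L'.map ⇑Cr *ᵥ (Q.map ⇑Cr *ᵥ (BG2 *ᵥ t)), t, ?_⟩
    apply hNinj
    rw [Matrix.mulVec_add, hNC, hND, ← Matrix.mulVec_add, ← hdec, hw]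
  -- the syzygy span identity
  have hspan : LinearMap.ker p = Submodule.span (Rp n K)
      ((LinearMap.ker p : Set (Fin (aE - aG) → Rp n K)) ∩
        ({v | ∀ j, v j ∈ MvPolynomial.homogeneousSubmodule (Fin (n + 1)) K 1} ∪
         {v | ∀ j, v j ∈ MvPolynomial.homogeneousSubmodule (Fin (n + 1)) K 2})) := by
    apply le_antisymm
    · intro v hv
      obtain ⟨s, t, hst⟩ := hsyz v hv
      have hcolC : ∀ j, (fun i => Cm i j) ∈ LinearMap.ker p := by
        intro j
        rw [hkerp]
        have hcol : (fun i => Cm i j) = Cm *ᵥ Pi.single j 1 := by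
          funext i; simp [Matrix.mulVec_single]
        rw [hcol, hNC]
        have h := hexE.apply_apply_eq_zero (L.map ⇑Cr *ᵥ Pi.single j 1)
        rwa [Matrix.mulVecLin_apply] at h
      have hcolD : ∀ j, (fun i => Dm i j) ∈ LinearMap.ker p := by
        intro j
        rw [hkerp]
        have hcol : (fun i => Dm i j) = Dm *ᵥ Pi.single j 1 := by
          funext i; simp [Matrix.mulVec_single]
        rw [hcol, hND]
        have h := hexE.apply_apply_eq_zero (Q.map ⇑Cr *ᵥ (BG2 *ᵥ Pi.single j 1))
        rwa [Matrix.mulVecLin_apply] at h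
      rw [hst, mulVec_eq_sum_cols, mulVec_eq_sum_cols]
      apply Submodule.add_mem
      · refine Submodule.sum_mem _ fun j _ => Submodule.smul_mem _ _ ?_
        apply Submodule.subset_span
        exact ⟨hcolC j, Or.inl fun i =>
          (MvPolynomial.mem_homogeneousSubmodule _ _).mpr (hChom i j)⟩
      · refine Submodule.sum_mem _ fun j _ => Submodule.smul_mem _ _ ?_
        apply Submodule.subset_span
        exact ⟨hcolD j, Or.inr fun i =>
          (MvPolynomial.mem_homogeneousSubmodule _ _).mpr (hDhom i j)⟩
    · exact Submodule.span_le.mpr Set.inter_subset_left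
  refine ⟨haG, ⟨p, hpsurj, hgen, hspan⟩, ?_⟩
  -- minimality
  intro c q hq
  choose u hu using fun l => hpsurj (q (Pi.single l 1))
  choose y hy using fun i => hq (p (Pi.single i 1))
  apply card_le_of_hits_basis (fun j l => constantCoeff (u l j))
  intro i
  refine ⟨fun l => constantCoeff (y i l), ?_⟩
  have hyi : ∑ l, y i l • (Pi.single l (1 : Rp n K) : Fin c → Rp n K) = y i := by
    funext j
    simp [Pi.single_apply, Finset.sum_apply]
  have hz : (∑ l, y i l • u l) - Pi.single i 1 ∈ LinearMap.ker p := by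
    rw [LinearMap.mem_ker, map_sub, map_sum]
    have h6 : ∑ l, p (y i l • u l) = q (y i) := by
      calc ∑ l, p (y i l • u l) = ∑ l, y i l • q (Pi.single l 1) := by
            refine Finset.sum_congr rfl fun l _ => ?_
            rw [_root_.map_smul, hu]
        _ = q (∑ l, y i l • (Pi.single l (1 : Rp n K) : Fin c → Rp n K)) := by rw [map_sum]; simp
        _ = q (y i) := by rw [hyi]
    rw [h6, hy, sub_self]
  have hzcc := hcc _ hz
  funext j
  have h3 := hzcc j
  simp only [Pi.sub_apply, Finset.sum_apply, Pi.smul_apply, smul_eq_mul, map_sub, map_sum,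
    _root_.map_mul] at h3
  rw [sub_eq_zero] at h3
  have h4 : constantCoeff ((Pi.single i (1 : Rp n K) : Fin (aE - aG) → Rp n K) j) = (Pi.single i (1 : K) : Fin (aE - aG) → K) j := by
    rcases eq_or_ne j i with h | h
    · subst h; simp
    · simp [Pi.single_eq_of_ne h]
  rw [h4] at h3
  show (∑ l, constantCoeff (u l j) * constantCoeff (y i l)) = (Pi.single i (1 : K) : Fin (aE - aG) → K) j
  rw [← h3]
  exact Finset.sum_congr rfl fun l _ => mul_comm _ _
end

section
/- With notation as above, if additionally the induced map μ²: E² → G² is surjective, then F = ker(μ) is linearly presented (generated in degree m with only linear syzygies) and β_{1,m+1}(F) = β_{1,m+1}(E) − β_{1,m+1}(G). -/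
open Function

set_option maxHeartbeats 1000000
set_option synthInstance.maxHeartbeats 400000

/-- Splitting data for a surjective matrix over a field. -/
lemma exists_splitting {K : Type*} [Field K] {a b : ℕ} (M : Matrix (Fin b) (Fin a) K)
    (h : Function.Surjective M.mulVecLin) :
    ∃ (N : Matrix (Fin a) (Fin (a - b)) K) (L : Matrix (Fin (a - b)) (Fin a) K)
      (S : Matrix (Fin a) (Fin b) K),
      L * N = 1 ∧ M * N = 0 ∧ (1 : Matrix (Fin a) (Fin a) K) - N * L = S * M := by
  classical
  set f := M.mulVecLin with hfdef
  have hrange : LinearMap.range f = ⊤ := LinearMap.range_eq_top.mpr h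
  have hker : Module.finrank K (LinearMap.ker f) = a - b := by
    have h1 := LinearMap.finrank_range_add_finrank_ker f
    rw [hrange, finrank_top] at h1
    simp [Module.finrank_pi] at h1
    omega
  let bas : Module.Basis (Fin (a - b)) K (LinearMap.ker f) :=
    Module.finBasisOfFinrankEq K _ hker
  let j : (Fin (a - b) → K) →ₗ[K] (Fin a → K) :=
    (LinearMap.ker f).subtype ∘ₗ (bas.equivFun.symm : (Fin (a - b) → K) ≃ₗ[K] _).toLinearMap
  have hjker : LinearMap.ker j = ⊥ := by
    rw [LinearMap.ker_eq_bot]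
    exact (Submodule.injective_subtype _).comp bas.equivFun.symm.injective
  obtain ⟨g, hg⟩ := j.exists_leftInverse_of_injective hjker
  obtain ⟨s, hs⟩ := f.exists_rightInverse_of_surjective hrange
  have hMf : LinearMap.toMatrix' f = M := by
    rw [hfdef, ← Matrix.toLin'_apply', LinearMap.toMatrix'_toLin']
  have hjmem : ∀ v, j v ∈ LinearMap.ker f := fun v => ((bas.equivFun.symm v) : LinearMap.ker f).2
  refine ⟨LinearMap.toMatrix' j, LinearMap.toMatrix' g,
    LinearMap.toMatrix' ((LinearMap.id - j ∘ₗ g) ∘ₗ s), ?_, ?_, ?_⟩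
  · rw [← LinearMap.toMatrix'_comp, hg, LinearMap.toMatrix'_id]
  · rw [← hMf, ← LinearMap.toMatrix'_comp]
    have hfj : f ∘ₗ j = 0 := LinearMap.ext fun v => LinearMap.mem_ker.mp (hjmem v)
    rw [hfj, map_zero]
  · have hkill : ∀ z, z ∈ LinearMap.ker f → z - j (g z) = 0 := by
      intro z hz
      have hzj : j (bas.equivFun ⟨z, hz⟩) = z := by
        show (LinearMap.ker f).subtype (bas.equivFun.symm (bas.equivFun ⟨z, hz⟩)) = z
        rw [LinearEquiv.symm_apply_apply]
        rfl
      rw [← hzj]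
      have hgj : g (j (bas.equivFun ⟨z, hz⟩)) = bas.equivFun ⟨z, hz⟩ := by
        have := congrFun (congrArg DFunLike.coe hg) (bas.equivFun ⟨z, hz⟩)
        simpa using this
      rw [hgj, sub_self]
    have key : (LinearMap.id - j ∘ₗ g) = ((LinearMap.id - j ∘ₗ g) ∘ₗ s) ∘ₗ f := by
      refine LinearMap.ext fun v => ?_
      have h1 : f (s (f v)) = f v := congrFun (congrArg DFunLike.coe hs) (f v)
      have h2 : (s (f v) - v) - j (g (s (f v) - v)) = 0 :=
        hkill _ (LinearMap.mem_ker.mpr (by rw [map_sub, h1, sub_self]))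
      simp only [LinearMap.comp_apply, LinearMap.sub_apply, LinearMap.id_apply, map_sub] at h2 ⊢
      linear_combination (norm := module) -h2
    calc (1 : Matrix (Fin a) (Fin a) K) - LinearMap.toMatrix' j * LinearMap.toMatrix' g
        = LinearMap.toMatrix' (LinearMap.id - j ∘ₗ g) := by
          rw [map_sub, LinearMap.toMatrix'_id, LinearMap.toMatrix'_comp]
      _ = LinearMap.toMatrix' (((LinearMap.id - j ∘ₗ g) ∘ₗ s) ∘ₗ f) := by rw [← key]
      _ = LinearMap.toMatrix' ((LinearMap.id - j ∘ₗ g) ∘ₗ s) * M := by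
          rw [LinearMap.toMatrix'_comp, hMf]

lemma rank_le_of_surj {K : Type*} [Field K] {a b : ℕ} (M : Matrix (Fin b) (Fin a) K)
    (h : Function.Surjective M.mulVecLin) : b ≤ a := by
  have h1 := LinearMap.finrank_range_add_finrank_ker M.mulVecLin
  rw [LinearMap.range_eq_top.mpr h, finrank_top] at h1
  simp [Module.finrank_pi] at h1
  omega

lemma recover_of_ker {R : Type*} [CommRing R] {a b c : ℕ}
    {M : Matrix (Fin b) (Fin a) R} {N : Matrix (Fin a) (Fin c) R}
    {L : Matrix (Fin c) (Fin a) R} {S : Matrix (Fin a) (Fin b) R}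
    (hS : (1 : Matrix (Fin a) (Fin a) R) - N * L = S * M)
    {z : Fin a → R} (hz : M.mulVec z = 0) :
    N.mulVec (L.mulVec z) = z := by
  have h := congrArg (fun m : Matrix (Fin a) (Fin a) R => m.mulVec z) hS
  simp only [Matrix.sub_mulVec, Matrix.one_mulVec, ← Matrix.mulVec_mulVec, hz,
    Matrix.mulVec_zero] at h
  exact (sub_eq_zero.mp h).symm

lemma constCoeff_map_mulVec {K : Type*} [Field K] {n a b : ℕ}
    (M : Matrix (Fin b) (Fin a) K) (v : Fin a → MvPolynomial (Fin (n + 1)) K) (i : Fin b) :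
    MvPolynomial.constantCoeff (((M.map (MvPolynomial.C : K →+* MvPolynomial (Fin (n + 1)) K)).mulVec v) i)
      = M.mulVec (fun k => MvPolynomial.constantCoeff (v k)) i := by
  rw [RingHom.map_mulVec]
  congr 1
  · ext p q
    simp [Matrix.map_apply]

lemma constCoeff_linear_mulVec {K : Type*} [Field K] {n a b : ℕ}
    (B : Matrix (Fin b) (Fin a) (MvPolynomial (Fin (n + 1)) K))
    (hB : ∀ i j, (B i j).IsHomogeneous 1) (w : Fin a → MvPolynomial (Fin (n + 1)) K)
    (i : Fin b) : MvPolynomial.constantCoeff ((B.mulVec w) i) = 0 := by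
  simp only [Matrix.mulVec, dotProduct, map_sum, _root_.map_mul]
  apply Finset.sum_eq_zero
  intro j _
  have : MvPolynomial.constantCoeff (B i j) = 0 := by
    rw [MvPolynomial.constantCoeff_eq]
    exact (hB i j).coeff_eq_zero (by simp [map_zero])
  rw [this, zero_mul]



/-- Theorem A (iii).  In the setting of Theorem A (ii) (`E` `m`-linearly presented, `G`
`m`-linearly presented up to order 2, `μ : E → G` surjective graded with `μ¹` surjective),
if moreover the induced map `μ² : E² → G²` is surjective, then `F = ker μ` is linearly
presented with `β_{0,m}(F) = aE - aG` and `β_{1,m+1}(F) = bE - bG`: there is an exact,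
automatically minimal, presentation
`R(-m-1)^{bE-bG} --C--> R(-m)^{aE-aG} --p--> F → 0` with `C` a matrix of linear forms. -/
theorem stmt14 (n aE bE cE aG bG cG : ℕ) (K : Type*) [Field K]
    (E G : Type*) [AddCommGroup E] [Module (Rp n K) E] [AddCommGroup G] [Module (Rp n K) G]
    (πE : (Fin aE → Rp n K) →ₗ[Rp n K] E) (hπE : Function.Surjective πE)
    (AE : Matrix (Fin aE) (Fin bE) (Rp n K)) (hAE : ∀ i j, (AE i j).IsHomogeneous 1)
    (hexE : Function.Exact AE.mulVecLin πE)
    -- second syzygies of `E`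
    (AE2 : Matrix (Fin bE) (Fin cE) (Rp n K))
    (hexE2 : Function.Exact AE2.mulVecLin AE.mulVecLin)
    (πG : (Fin aG → Rp n K) →ₗ[Rp n K] G) (hπG : Function.Surjective πG)
    (BG1 : Matrix (Fin aG) (Fin bG) (Rp n K)) (hBG1 : ∀ i j, (BG1 i j).IsHomogeneous 1)
    (hexG1 : Function.Exact BG1.mulVecLin πG)
    (BG2 : Matrix (Fin bG) (Fin cG) (Rp n K)) (hBG2 : ∀ i j, (BG2 i j).IsHomogeneous 1)
    (hexG2 : Function.Exact BG2.mulVecLin BG1.mulVecLin)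
    (μ : E →ₗ[Rp n K] G) (hμ : Function.Surjective μ)
    -- the induced chain maps `μ⁰`, `μ¹`, `μ²`
    (M0 : Matrix (Fin aG) (Fin aE) K) (M1 : Matrix (Fin bG) (Fin bE) K)
    (M2 : Matrix (Fin cG) (Fin cE) (Rp n K))
    (hcomm0 : πG ∘ₗ (M0.map (MvPolynomial.C)).mulVecLin = μ ∘ₗ πE)
    (hcomm1 : (M0.map (MvPolynomial.C)) * AE = BG1 * (M1.map (MvPolynomial.C)))
    (hcomm2 : (M1.map (MvPolynomial.C)) * AE2 = BG2 * M2)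
    (hμ1 : Function.Surjective (M1.map (MvPolynomial.C : K →+* Rp n K)).mulVecLin)
    -- `μ²` is surjective
    (hμ2 : Function.Surjective M2.mulVecLin) :
    aG ≤ aE ∧ bG ≤ bE ∧
    ∃ (C : Matrix (Fin (aE - aG)) (Fin (bE - bG)) (Rp n K))
      (p : (Fin (aE - aG) → Rp n K) →ₗ[Rp n K] ↥(LinearMap.ker μ)),
      (∀ i j, (C i j).IsHomogeneous 1) ∧
      Function.Surjective p ∧
      (∀ i, ∃ v : Fin aE → K, ((p (Pi.single i 1) : E) = πE fun j => MvPolynomial.C (v j))) ∧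
      Function.Exact C.mulVecLin p := by
  classical
  set Cc : K →+* Rp n K := MvPolynomial.C with hCc
  replace hcomm1 : (M0.map ⇑Cc) * AE = BG1 * (M1.map ⇑Cc) := hcomm1
  replace hcomm2 : (M1.map ⇑Cc) * AE2 = BG2 * M2 := hcomm2
  -- `μ⁰` and `μ¹` are surjective over `K`
  have hcomm0' : ∀ x, πG ((M0.map ⇑Cc).mulVec x) = μ (πE x) := by
    intro x
    have hc := congrFun (congrArg DFunLike.coe hcomm0) x
    simpa only [LinearMap.comp_apply, Matrix.mulVecLin_apply] using hc
  have hM0 : Function.Surjective (Matrix.mulVecLin M0) := by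
    intro y
    obtain ⟨x, hx⟩ : ∃ x, μ (πE x) = πG (fun j => Cc (y j)) := (hμ.comp hπE) _
    have h0 : πG ((M0.map ⇑Cc).mulVec x - fun j => Cc (y j)) = 0 := by
      rw [map_sub, hcomm0' x, hx, sub_self]
    obtain ⟨w, hw⟩ := (hexG1 _).mp h0
    refine ⟨fun k => MvPolynomial.constantCoeff (x k), ?_⟩
    funext i
    have h1 := congrArg (fun z : Fin aG → Rp n K => MvPolynomial.constantCoeff (z i)) hw
    simp only [Matrix.mulVecLin_apply, Pi.sub_apply, map_sub] at h1
    rw [constCoeff_linear_mulVec BG1 hBG1 w i] at h1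
    have h2 : MvPolynomial.constantCoeff (((M0.map ⇑Cc).mulVec x) i) - y i = 0 := by
      simpa [hCc, MvPolynomial.constantCoeff_C] using h1.symm
    rw [constCoeff_map_mulVec M0 x i] at h2
    rw [Matrix.mulVecLin_apply]
    exact sub_eq_zero.mp h2
  have hM1 : Function.Surjective (Matrix.mulVecLin M1) := by
    intro y
    obtain ⟨x, hx⟩ := hμ1 (fun j => Cc (y j))
    refine ⟨fun k => MvPolynomial.constantCoeff (x k), ?_⟩
    funext i
    have h1 := congrArg (fun z : Fin bG → Rp n K => MvPolynomial.constantCoeff (z i)) hx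
    simp only [Matrix.mulVecLin_apply] at h1
    rw [constCoeff_map_mulVec M1 x i] at h1
    simpa [hCc, Matrix.mulVecLin_apply, MvPolynomial.constantCoeff_C] using h1
  have haG : aG ≤ aE := rank_le_of_surj M0 hM0
  have hbG : bG ≤ bE := rank_le_of_surj M1 hM1
  obtain ⟨N0, L0, S0, hLN0, hMN0, hSM0⟩ := exists_splitting M0 hM0
  obtain ⟨N1, L1, S1, hLN1, hMN1, hSM1⟩ := exists_splitting M1 hM1
  -- lift the splitting identities to `R`
  have hmapzero : ∀ {p q : ℕ} , ((0 : Matrix (Fin p) (Fin q) K)).map ⇑Cc = 0 := by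
    intro p q; ext i j; simp
  have hLN0' : (L0.map ⇑Cc) * (N0.map ⇑Cc) = 1 := by
    rw [← Matrix.map_mul, hLN0, Matrix.map_one _ (map_zero Cc) (map_one Cc)]
  have hLN1' : (L1.map ⇑Cc) * (N1.map ⇑Cc) = 1 := by
    rw [← Matrix.map_mul, hLN1, Matrix.map_one _ (map_zero Cc) (map_one Cc)]
  have hMN0' : (M0.map ⇑Cc) * (N0.map ⇑Cc) = 0 := by
    rw [← Matrix.map_mul, hMN0, hmapzero]
  have hMN1' : (M1.map ⇑Cc) * (N1.map ⇑Cc) = 0 := by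
    rw [← Matrix.map_mul, hMN1, hmapzero]
  have hSM0' : (1 : Matrix (Fin aE) (Fin aE) (Rp n K)) - (N0.map ⇑Cc) * (L0.map ⇑Cc)
      = (S0.map ⇑Cc) * (M0.map ⇑Cc) := by
    have h := congrArg (fun m : Matrix (Fin aE) (Fin aE) K => m.map (⇑Cc)) hSM0
    rwa [Matrix.map_sub _ (fun a b => map_sub Cc a b),
      Matrix.map_one _ (map_zero Cc) (map_one Cc), Matrix.map_mul, Matrix.map_mul] at h
  have hSM1' : (1 : Matrix (Fin bE) (Fin bE) (Rp n K)) - (N1.map ⇑Cc) * (L1.map ⇑Cc)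
      = (S1.map ⇑Cc) * (M1.map ⇑Cc) := by
    have h := congrArg (fun m : Matrix (Fin bE) (Fin bE) K => m.map (⇑Cc)) hSM1
    rwa [Matrix.map_sub _ (fun a b => map_sub Cc a b),
      Matrix.map_one _ (map_zero Cc) (map_one Cc), Matrix.map_mul, Matrix.map_mul] at h
  -- the presentation matrix of `F`
  set Cm : Matrix (Fin (aE - aG)) (Fin (bE - bG)) (Rp n K) :=
    (L0.map ⇑Cc) * AE * (N1.map ⇑Cc) with hCm
  have hkey : (N0.map ⇑Cc) * Cm = AE * (N1.map ⇑Cc) := by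
    have hNL : (N0.map ⇑Cc) * (L0.map ⇑Cc)
        = 1 - (S0.map ⇑Cc) * (M0.map ⇑Cc) := by rw [← hSM0', sub_sub_cancel]
    have h2 : (M0.map ⇑Cc) * (AE * (N1.map ⇑Cc)) = 0 := by
      rw [← Matrix.mul_assoc, hcomm1, Matrix.mul_assoc, hMN1', Matrix.mul_zero]
    calc (N0.map ⇑Cc) * Cm = ((N0.map ⇑Cc) * (L0.map ⇑Cc)) * (AE * (N1.map ⇑Cc)) := by
          simp only [hCm, Matrix.mul_assoc]
      _ = AE * (N1.map ⇑Cc) - (S0.map ⇑Cc) * ((M0.map ⇑Cc) * (AE * (N1.map ⇑Cc))) := by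
          rw [hNL, Matrix.sub_mul, Matrix.one_mul, Matrix.mul_assoc]
      _ = AE * (N1.map ⇑Cc) := by rw [h2, Matrix.mul_zero, sub_zero]
  -- the projection map
  have hq0 : ∀ v, μ (πE ((N0.map ⇑Cc).mulVec v)) = 0 := by
    intro v
    rw [← hcomm0', Matrix.mulVec_mulVec, hMN0', Matrix.zero_mulVec, map_zero]
  set q : (Fin (aE - aG) → Rp n K) →ₗ[Rp n K] E :=
    πE ∘ₗ (N0.map ⇑Cc).mulVecLin with hqdef
  have hqv : ∀ v, q v = πE ((N0.map ⇑Cc).mulVec v) := fun v => rfl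
  set p : (Fin (aE - aG) → Rp n K) →ₗ[Rp n K] ↥(LinearMap.ker μ) :=
    LinearMap.codRestrict (LinearMap.ker μ) q
      (fun v => LinearMap.mem_ker.mpr (hq0 v)) with hpdef
  have hpv : ∀ v, (p v : E) = πE ((N0.map ⇑Cc).mulVec v) := fun v => rfl
  refine ⟨haG, hbG, Cm, p, ?_, ?_, ?_, ?_⟩
  · -- entries of Cm are linear forms
    intro i j
    have hform : Cm i j = ∑ k, (∑ l, MvPolynomial.C (L0 i l) * AE l k)
        * MvPolynomial.C (N1 k j) := by
      simp [hCm, Matrix.mul_apply, Matrix.map_apply, hCc]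
    rw [hform, ← MvPolynomial.mem_homogeneousSubmodule]
    refine Submodule.sum_mem _ fun k _ => ?_
    rw [MvPolynomial.mem_homogeneousSubmodule]
    refine MvPolynomial.IsHomogeneous.mul ?_ (MvPolynomial.isHomogeneous_C _ _)
    rw [← MvPolynomial.mem_homogeneousSubmodule]
    refine Submodule.sum_mem _ fun l _ => ?_
    rw [MvPolynomial.mem_homogeneousSubmodule]
    exact (hAE l k).C_mul (L0 i l)
  · -- surjectivity of p
    intro f
    obtain ⟨x, hx⟩ := hπE (f : E)
    have h0 : πG ((M0.map ⇑Cc).mulVec x) = 0 := by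
      rw [hcomm0' x, hx]
      exact LinearMap.mem_ker.mp f.2
    obtain ⟨w, hw⟩ := (hexG1 _).mp h0
    obtain ⟨u, hu⟩ := hμ1 w
    simp only [Matrix.mulVecLin_apply] at hw hu
    have hz : (M0.map ⇑Cc).mulVec (x - AE.mulVec u) = 0 := by
      rw [Matrix.mulVec_sub, Matrix.mulVec_mulVec, hcomm1, ← Matrix.mulVec_mulVec, hu, hw,
        sub_self]
    refine ⟨(L0.map ⇑Cc).mulVec (x - AE.mulVec u), Subtype.ext ?_⟩
    rw [hpv, recover_of_ker hSM0' hz, map_sub, hx]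
    have : πE (AE.mulVec u) = 0 := by
      have := hexE.apply_apply_eq_zero u
      simpa [Matrix.mulVecLin_apply] using this
    rw [this, sub_zero]
  · -- images of the standard basis vectors are constants
    intro i
    refine ⟨fun j => N0 j i, ?_⟩
    rw [hpv]
    congr 1
    funext j
    simp [Matrix.mulVec_single, Matrix.map_apply, hCc]
  · -- exactness at the middle
    rw [LinearMap.exact_iff]
    apply le_antisymm
    · -- ker p ⊆ range Cm
      intro v hv
      have hv' : πE ((N0.map ⇑Cc).mulVec v) = 0 := by
        have := (Subtype.ext_iff.mp (LinearMap.mem_ker.mp hv) : ((p v : E)) = 0)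
        rwa [hpv] at this
      obtain ⟨u, hu⟩ := (hexE _).mp hv'
      simp only [Matrix.mulVecLin_apply] at hu
      have h1 : BG1.mulVec ((M1.map ⇑Cc).mulVec u) = 0 := by
        rw [Matrix.mulVec_mulVec, ← hcomm1, ← Matrix.mulVec_mulVec, hu,
          Matrix.mulVec_mulVec, hMN0', Matrix.zero_mulVec]
      have h1' : BG1.mulVecLin ((M1.map ⇑Cc).mulVec u) = 0 := by
        rw [Matrix.mulVecLin_apply]; exact h1
      obtain ⟨s, hs⟩ := (hexG2 _).mp h1'
      obtain ⟨t, ht⟩ := hμ2 s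
      rw [Matrix.mulVecLin_apply] at hs
      rw [Matrix.mulVecLin_apply] at ht
      have h2 : (M1.map ⇑Cc).mulVec (u - AE2.mulVec t) = 0 := by
        rw [Matrix.mulVec_sub, Matrix.mulVec_mulVec, hcomm2, ← Matrix.mulVec_mulVec, ht, hs,
          sub_self]
      refine ⟨(L1.map ⇑Cc).mulVec (u - AE2.mulVec t), ?_⟩
      have h3 : (N0.map ⇑Cc).mulVec (Cm.mulVec ((L1.map ⇑Cc).mulVec (u - AE2.mulVec t)))
          = (N0.map ⇑Cc).mulVec v := by
        rw [Matrix.mulVec_mulVec, hkey, ← Matrix.mulVec_mulVec, recover_of_ker hSM1' h2,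
          Matrix.mulVec_sub, ← hu]
        have : AE.mulVec (AE2.mulVec t) = 0 := by
          have := hexE2.apply_apply_eq_zero t
          simpa [Matrix.mulVecLin_apply] using this
        rw [this, sub_zero]
      have h4 := congrArg ((L0.map ⇑Cc).mulVec ·) h3
      simp only [Matrix.mulVec_mulVec] at h4
      rw [← Matrix.mul_assoc, hLN0', Matrix.one_mul, Matrix.one_mulVec] at h4
      rw [Matrix.mulVecLin_apply, Matrix.mulVec_mulVec]
      exact h4
    · -- range Cm ⊆ ker p
      rintro v ⟨y, rfl⟩
      apply LinearMap.mem_ker.mpr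
      apply Subtype.ext
      rw [hpv]
      show πE ((N0.map ⇑Cc).mulVec ((Cm.mulVecLin) y)) = (0 : E)
      rw [Matrix.mulVecLin_apply, Matrix.mulVec_mulVec, hkey, ← Matrix.mulVec_mulVec]
      have := hexE.apply_apply_eq_zero ((N1.map ⇑Cc).mulVec y)
      simpa [Matrix.mulVecLin_apply] using this
end
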